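/- arXiv:1707.06698 — 9 statements merged into one kernel-verified Lean document; each statement's English description precedes it below -/
import Mathlib

section
/- For every n ≥ 2, the weight of the Steinhaus triangle generated by e₁ = (0,1,0,…,0) ∈ F₂ⁿ equals ⌊(3n-2)/2⌋. -/
/-- The derivative of a binary sequence: `(∂x)ᵢ = xᵢ + xᵢ₊₁`. -/
def der {n : ℕ} (x : Fin n → ZMod 2) : Fin (n - 1) → ZMod 2 :=
  fun i => x ⟨i.1, by have := i.2; omega⟩ + x ⟨i.1 + 1, by have := i.2; omega⟩

/-- The iterated derivative `∂ʲx : F₂^{n-j}`. -/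
def derIter {n : ℕ} (x : Fin n → ZMod 2) : (j : ℕ) → Fin (n - j) → ZMod 2
  | 0 => x
  | j + 1 => der (derIter x j)

/-- The weight (number of ones) of a binary sequence. -/
def wt {m : ℕ} (y : Fin m → ZMod 2) : ℕ :=
  (Finset.univ.filter fun i => y i = 1).card

/-- The weight of the Steinhaus triangle of `x`: the sum of the weights of all rows. -/
def tw {n : ℕ} (x : Fin n → ZMod 2) : ℕ :=
  ∑ j ∈ Finset.range n, wt (derIter x j)

/-- The standard basis vector `e k` with a single one in position `k`. -/
def e (n k : ℕ) : Fin n → ZMod 2 := fun i => if i.1 = k then 1 else 0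

/-! Differentiation is linear, fixes `e 0` and sends `e (k + 1)` to `e k + e (k + 1)`, so the rows
of the triangle of `e 1` alternate between `e 1` and `e 0 + e 1`, of weights `1` and `2` except in
the last row. Removing the first two rows of the triangle of length `n + 2` leaves the triangle of
length `n`, whence `T(n + 2) = T(n) + 3` for `n ≥ 1`. -/

lemma der_add {m : ℕ} (x y : Fin m → ZMod 2) : der (x + y) = der x + der y := by
  funext i
  simp only [der, Pi.add_apply]
  ring

lemma der_e_zero (m : ℕ) : der (e m 0) = e (m - 1) 0 := by
  funext i
  simp [der, e]

lemma der_e_succ (m k : ℕ) : der (e m (k + 1)) = e (m - 1) k + e (m - 1) (k + 1) := by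
  funext i
  simp only [der, e, Pi.add_apply, add_left_inj]
  split_ifs <;> simp_all

lemma derIter_e_one (n j : ℕ) :
    derIter (e n 1) j = if Even j then e (n - j) 1 else e (n - j) 0 + e (n - j) 1 := by
  induction j with
  | zero => rfl
  | succ j ih =>
    rw [derIter, ih]
    change _ = if Even (j + 1) then e (n - j - 1) 1 else e (n - j - 1) 0 + e (n - j - 1) 1
    by_cases hj : Even j
    · simp [hj, Nat.even_add_one, der_e_succ]
    · simp [hj, Nat.even_add_one, der_add, der_e_zero, der_e_succ, ← add_assoc,
        ZModModule.add_self]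

lemma wt_add {m : ℕ} {x y : Fin m → ZMod 2} (hxy : ∀ i, x i = 0 ∨ y i = 0) :
    wt (x + y) = wt x + wt y := by
  unfold wt
  rw [← Finset.card_union_of_disjoint]
  · congr 1
    ext i
    rcases hxy i with h | h <;> simp [h]
  · rw [Finset.disjoint_filter]
    intro i _ hx hy
    rcases hxy i with h | h <;> simp_all

lemma wt_e (m k : ℕ) : wt (e m k) = if k < m then 1 else 0 := by
  unfold wt
  split_ifs with hk
  · rw [Finset.card_eq_one]
    exact ⟨⟨k, hk⟩, by ext i; simp [e, Fin.ext_iff]⟩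
  · rw [Finset.card_eq_zero, Finset.filter_eq_empty_iff]
    intro i _
    have := i.2
    simp [e]
    omega

lemma wt_derIter_e_one (n j : ℕ) :
    wt (derIter (e n 1) j) = if Even j then (if 1 < n - j then 1 else 0)
      else (if 0 < n - j then 1 else 0) + (if 1 < n - j then 1 else 0) := by
  rw [derIter_e_one]
  by_cases hj : Even j
  · rw [if_pos hj, if_pos hj, wt_e]
  · rw [if_neg hj, if_neg hj, wt_add fun i => ?_, wt_e, wt_e]
    simp only [e]
    split_ifs <;> simp_all

lemma tw_e_one_add_two (n : ℕ) : tw (e (n + 2) 1) = tw (e n 1) + min (n + 1) 2 + 1 := by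
  unfold tw
  rw [Finset.sum_range_succ', Finset.sum_range_succ']
  have shift (j : ℕ) : wt (derIter (e (n + 2) 1) (j + 2)) = wt (derIter (e n 1) j) := by
    simp only [wt_derIter_e_one, Nat.add_sub_add_right, Nat.even_add, even_two, iff_true]
  simp only [shift]
  rw [wt_derIter_e_one, wt_derIter_e_one, if_neg Nat.not_even_one, if_pos Even.zero]
  split_ifs <;> omega

theorem stmt3_general (n : ℕ) : tw (e n 1) = (3 * n - 2) / 2 := by
  induction n using Nat.twoStepInduction with
  | zero => rfl
  | one => decide
  | more n ih _ =>
    rw [tw_e_one_add_two, ih]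
    omega

theorem stmt3 (n : ℕ) (hn : 2 ≤ n) : tw (e n 1) = (3 * n - 2) / 2 :=
  stmt3_general n
end

section
/- For every n ≥ 3, the weight of the Steinhaus triangle generated by e₂ = (0,0,1,0,…,0) ∈ F₂ⁿ equals 2n-4 if n ≡ 2 (mod 4), and 2n-3 otherwise. -/
lemma cast2 (m : ℕ) : ((m : ZMod 2) = 1) ↔ m % 2 = 1 := by
  rw [← ZMod.natCast_mod m 2]
  rcases Nat.mod_two_eq_zero_or_one m with h | h <;> rw [h] <;> simp

lemma choose2 (j : ℕ) :
    Nat.choose j 2 % 2 = if j % 4 = 2 ∨ j % 4 = 3 then 1 else 0 := by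
  induction j with
  | zero => decide
  | succ j ih =>
    have h : Nat.choose (j+1) 2 = Nat.choose j 1 + Nat.choose j 2 :=
      Nat.choose_succ_succ j 1
    rw [h, Nat.choose_one_right]
    split_ifs at ih ⊢ <;> omega

lemma row (n j : ℕ) : ∀ i : Fin (n - j),
    derIter (e n 2) j i = if i.1 ≤ 2 then ((Nat.choose j (2 - i.1) : ZMod 2)) else 0 := by
  induction j with
  | zero =>
    rintro ⟨i, hi⟩
    simp only [derIter, e]
    by_cases h2 : i = 2
    · subst h2; norm_num
    · by_cases h1 : i = 1
      · subst h1; norm_num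
      · by_cases h0 : i = 0
        · subst h0; norm_num
        · simp [h0, h1, h2, show ¬ i ≤ 2 by omega]
  | succ j ih =>
    rintro ⟨i, hi⟩
    have h1 : derIter (e n 2) (j+1) ⟨i, hi⟩
        = derIter (e n 2) j ⟨i, by omega⟩ + derIter (e n 2) j ⟨i+1, by omega⟩ := rfl
    rw [h1, ih, ih]
    by_cases h2 : i = 2
    · subst h2; norm_num
    · by_cases hh1 : i = 1
      · subst hh1
        norm_num [Nat.choose_succ_succ j 1, Nat.choose_one_right]
      · by_cases h0 : i = 0
        · subst h0
          norm_num [Nat.choose_succ_succ j 1]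
          ring
        · simp [show ¬ i ≤ 2 by omega, show ¬ i + 1 ≤ 2 by omega]

lemma sum3 (m : ℕ) (f : ℕ → ℕ) (hf : ∀ i, 3 ≤ i → f i = 0) :
    ∑ i ∈ Finset.range m, f i
      = (if 0 < m then f 0 else 0) + (if 1 < m then f 1 else 0)
        + (if 2 < m then f 2 else 0) := by
  match m with
  | 0 => simp
  | 1 => simp [Finset.sum_range_one]
  | 2 => simp [Finset.sum_range_succ]
  | (k+3) =>
    have hsub : ∑ i ∈ Finset.range (k+3), f i = ∑ i ∈ Finset.range 3, f i := by
      refine (Finset.sum_subset (Finset.range_subset_range.mpr (by omega)) ?_).symm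
      intro x _ hx
      rw [Finset.mem_range] at hx
      exact hf x (by omega)
    rw [hsub]
    simp [Finset.sum_range_succ]

lemma wt_row (n j : ℕ) (hjn : j < n) :
    wt (derIter (e n 2) j)
      = (if j < n - 2 then 1 else 0) + (if j < n - 1 ∧ j % 2 = 1 then 1 else 0)
        + (if j % 4 = 2 ∨ j % 4 = 3 then 1 else 0) := by
  rw [wt, Finset.card_filter]
  have h1 : ∀ i : Fin (n - j),
      (if derIter (e n 2) j i = 1 then (1:ℕ) else 0)
        = (fun k => if k ≤ 2 ∧ Nat.choose j (2 - k) % 2 = 1 then (1:ℕ) else 0) i.1 := by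
    intro i
    rw [row]
    by_cases h : i.1 ≤ 2
    · simp only [h, if_true, true_and, cast2]
    · simp [h]
  rw [Finset.sum_congr rfl fun i _ => h1 i,
    Fin.sum_univ_eq_sum_range (fun k => if k ≤ 2 ∧ Nat.choose j (2 - k) % 2 = 1 then (1:ℕ) else 0) (n - j)]
  rw [sum3 (n - j) (fun k => if k ≤ 2 ∧ Nat.choose j (2 - k) % 2 = 1 then (1:ℕ) else 0)
    (by intro i hi; simp only [show ¬ i ≤ 2 from by omega, false_and, if_false])]
  norm_num [choose2]
  split_ifs <;> omega

lemma sumA (k n : ℕ) :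
    ∑ j ∈ Finset.range n, (if j < k then (1:ℕ) else 0) = min k n := by
  induction n with
  | zero => simp
  | succ n ih =>
    rw [Finset.sum_range_succ, ih]
    split_ifs <;> omega

lemma sumB (k n : ℕ) :
    ∑ j ∈ Finset.range n, (if j < k ∧ j % 2 = 1 then (1:ℕ) else 0) = min k n / 2 := by
  induction n with
  | zero => simp
  | succ n ih =>
    rw [Finset.sum_range_succ, ih]
    split_ifs <;> omega

lemma sumC (n : ℕ) :
    ∑ j ∈ Finset.range n, (if j % 4 = 2 ∨ j % 4 = 3 then (1:ℕ) else 0)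
      = (n + 1) / 4 + n / 4 := by
  induction n with
  | zero => simp
  | succ n ih =>
    rw [Finset.sum_range_succ, ih]
    split_ifs <;> omega

theorem stmt4 (n : ℕ) (hn : 3 ≤ n) :
    tw (e n 2) = if n % 4 = 2 then 2 * n - 4 else 2 * n - 3 := by
  rw [tw, Finset.sum_congr rfl (fun j hj => wt_row n j (Finset.mem_range.mp hj))]
  rw [Finset.sum_add_distrib, Finset.sum_add_distrib, sumA, sumB, sumC]
  split_ifs <;> omega
end

section
/- For every n ≥ 4, the weight of the Steinhaus triangle generated by e₃ = (0,0,0,1,0,…,0) ∈ F₂ⁿ equals (9n-27)/4 if n ≡ 3 (mod 4), and ⌊(9n-20)/4⌋ otherwise. -/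
/-!
Four derivation steps take `e₃` back to itself: the rows of its triangle are
`e₃`, `e₂ + e₃`, `e₁ + e₃`, `e₀ + e₁ + e₂ + e₃`, and `∂⁴e₃ = e₃` because `∂⁴x_i = x_i + x_{i+4}` over
`F₂`. So lengthening the sequence by four adds the weight `1 + 2 + 2 + 4 = 9` of those four rows,
and the formula follows by induction on `n` from the cases `n = 4, 5, 6, 7`.
-/

open Finset

section Triangle

variable {n : ℕ}

lemma derIter_add_apply (x : Fin n → ZMod 2) (k j : ℕ) (i : Fin (n - (k + j))) :
    derIter x (k + j) i = derIter (derIter x k) j (Fin.cast (by omega) i) := by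
  induction j with
  | zero => rfl
  | succ j ih =>
    show der (derIter x (k + j)) i = der (derIter (derIter x k) j) _
    simp only [der, ih]
    rfl

lemma wt_comp_cast {m m' : ℕ} (h : m = m') (y : Fin m' → ZMod 2) :
    wt (fun i => y (Fin.cast h i)) = wt y := by
  subst h
  rfl

lemma wt_derIter_add (x : Fin n → ZMod 2) (k j : ℕ) :
    wt (derIter x (k + j)) = wt (derIter (derIter x k) j) := by
  rw [funext (derIter_add_apply x k j), wt_comp_cast]

lemma tw_eq_sum_add_tw_derIter (x : Fin n → ZMod 2) {k : ℕ} (hk : k ≤ n) :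
    tw x = ∑ j ∈ range k, wt (derIter x j) + tw (derIter x k) := by
  unfold tw
  rw [show range n = range (k + (n - k)) by rw [Nat.add_sub_cancel' hk], sum_range_add]
  simp only [wt_derIter_add]

lemma wt_eq_card_filter_range {L k : ℕ} (S : ℕ → Prop) [DecidablePred S] (y : Fin L → ZMod 2)
    (hy : ∀ i, y i = if S i.1 then 1 else 0) (hk : k ≤ L) (hS : ∀ i, S i → i < k) :
    wt y = #{i ∈ range k | S i} := by
  have hL : {i ∈ range L | S i} = {i ∈ range k | S i} := by
    ext i
    simp only [mem_filter, mem_range]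
    constructor
    · exact fun h => ⟨hS i h.2, h.2⟩
    · exact fun h => ⟨by omega, h.2⟩
  rw [← hL, card_filter, ← Fin.sum_univ_eq_sum_range (fun i => if S i then 1 else 0), wt,
    card_filter]
  refine sum_congr rfl fun i _ => ?_
  by_cases h : S i <;> simp [hy, h]

end Triangle

section BasisVector

variable (n : ℕ)

lemma derIter_e_three_zero (i : Fin (n - 0)) :
    derIter (e n 3) 0 i = if i.1 = 3 then 1 else 0 := rfl

lemma derIter_e_three_one (i : Fin (n - 1)) :
    derIter (e n 3) 1 i = if i.1 = 2 ∨ i.1 = 3 then 1 else 0 := by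
  show der (derIter (e n 3) 0) i = _
  simp only [der, derIter_e_three_zero]
  split_ifs <;> first | rfl | omega

lemma derIter_e_three_two (i : Fin (n - 2)) :
    derIter (e n 3) 2 i = if i.1 = 1 ∨ i.1 = 3 then 1 else 0 := by
  show der (derIter (e n 3) 1) i = _
  simp only [der, derIter_e_three_one]
  split_ifs <;> first | rfl | omega

lemma derIter_e_three_three (i : Fin (n - 3)) :
    derIter (e n 3) 3 i = if i.1 ≤ 3 then 1 else 0 := by
  show der (derIter (e n 3) 2) i = _
  simp only [der, derIter_e_three_two]
  split_ifs <;> first | rfl | omega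

lemma derIter_e_three_four : derIter (e n 3) 4 = e (n - 4) 3 := by
  funext i
  show der (derIter (e n 3) 3) i = _
  simp only [der, derIter_e_three_three, e]
  split_ifs <;> first | rfl | omega

end BasisVector

lemma tw_e_three_eq_add_nine {n : ℕ} (hn : 7 ≤ n) : tw (e n 3) = tw (e (n - 4) 3) + 9 := by
  have h₀ : wt (derIter (e n 3) 0) = 1 :=
    (wt_eq_card_filter_range (· = 3) _ (derIter_e_three_zero n) (k := 4) (by omega)
      (by omega)).trans rfl
  have h₁ : wt (derIter (e n 3) 1) = 2 :=
    (wt_eq_card_filter_range (fun i => i = 2 ∨ i = 3) _ (derIter_e_three_one n) (k := 4)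
      (by omega) (by omega)).trans rfl
  have h₂ : wt (derIter (e n 3) 2) = 2 :=
    (wt_eq_card_filter_range (fun i => i = 1 ∨ i = 3) _ (derIter_e_three_two n) (k := 4)
      (by omega) (by omega)).trans rfl
  have h₃ : wt (derIter (e n 3) 3) = 4 :=
    (wt_eq_card_filter_range (· ≤ 3) _ (derIter_e_three_three n) (k := 4) (by omega)
      (by omega)).trans rfl
  rw [tw_eq_sum_add_tw_derIter (e n 3) (k := 4) (by omega), derIter_e_three_four]
  simp only [sum_range_succ, sum_range_zero, h₀, h₁, h₂, h₃]
  omega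

theorem stmt5 (n : ℕ) (hn : 4 ≤ n) :
    tw (e n 3) = if n % 4 = 3 then (9 * n - 27) / 4 else (9 * n - 20) / 4 := by
  induction n using Nat.strong_induction_on with
  | _ n ih =>
    rcases lt_or_ge n 8 with hn8 | hn8
    · interval_cases n <;> decide
    · rw [tw_e_three_eq_add_nine (by omega), ih (n - 4) (by omega) (by omega)]
      split_ifs <;> omega
end

section
/- Let k ≥ 4 and n ≥ 9 be integers with k ≤ (n-1)/2. Then the weight of the Steinhaus triangle generated by the standard basis vector e_k ∈ F₂ⁿ is at least 2n-3; moreover, if n is even then it is strictly greater than 2n-3. -/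
-- parity recursion for binomial coefficients (Lucas at p = 2)
lemma par (l m : ℕ) :
    Nat.choose (l + m) l % 2 =
      if l % 2 = 1 ∧ m % 2 = 1 then 0 else Nat.choose (l / 2 + m / 2) (l / 2) % 2 := by
  have h : Nat.choose (l + m) l % 2 =
      (Nat.choose ((l + m) % 2) (l % 2) * Nat.choose ((l + m) / 2) (l / 2)) % 2 :=
    @Choose.choose_modEq_choose_mod_mul_choose_div_nat (l + m) l 2 ⟨Nat.prime_two⟩
  rcases Nat.mod_two_eq_zero_or_one l with hl | hl <;>
    rcases Nat.mod_two_eq_zero_or_one m with hm | hm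
  · have h1 : (l + m) % 2 = 0 := by omega
    have h2 : (l + m) / 2 = l / 2 + m / 2 := by omega
    rw [h1, h2, hl] at h
    simp only [Nat.choose_self, one_mul] at h
    rw [h, if_neg (by omega)]
  · have h1 : (l + m) % 2 = 1 := by omega
    have h2 : (l + m) / 2 = l / 2 + m / 2 := by omega
    rw [h1, h2, hl] at h
    simp only [Nat.choose_zero_right, one_mul] at h
    rw [h, if_neg (by omega)]
  · have h1 : (l + m) % 2 = 1 := by omega
    have h2 : (l + m) / 2 = l / 2 + m / 2 := by omega
    rw [h1, h2, hl] at h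
    simp only [Nat.choose_self, one_mul] at h
    rw [h, if_neg (by omega)]
  · have h1 : (l + m) % 2 = 0 := by omega
    rw [h1, hl] at h
    simp only [Nat.choose, zero_mul, Nat.zero_mod] at h
    rw [h, if_pos ⟨hl, hm⟩]

-- consequences of `par`
lemma odd_succ_self (x : ℕ) (h : x % 2 = 0) : Nat.choose (x + 1) x % 2 = 1 := by
  rw [par x 1, if_neg (by omega)]
  norm_num

lemma odd_self (l : ℕ) : Nat.choose (l + 0) l % 2 = 1 := by
  simp

lemma odd_two (l : ℕ) (h : l % 4 ≤ 1) : Nat.choose (l + 2) l % 2 = 1 := by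
  rw [par l 2, if_neg (by omega)]
  have := odd_succ_self (l / 2) (by omega)
  norm_num at this ⊢
  omega

lemma odd_three (l : ℕ) (h : l % 4 = 0) : Nat.choose (l + 3) l % 2 = 1 := by
  rw [par l 3, if_neg (by omega)]
  have := odd_succ_self (l / 2) (by omega)
  norm_num at this ⊢
  omega

-- counting lemmas
lemma cnt2 (N : ℕ) : ((Finset.range N).filter fun m => m % 2 = 0).card = (N + 1) / 2 := by
  induction N with
  | zero => simp
  | succ N ih =>
    rw [Finset.range_add_one, Finset.filter_insert]
    split_ifs with h
    · rw [Finset.card_insert_of_notMem (by simp)]; omega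
    · omega

lemma cntB (N : ℕ) :
    ((Finset.range N).filter fun m => m % 4 ≤ 1).card = (N + 3) / 4 + (N + 2) / 4 := by
  induction N with
  | zero => simp
  | succ N ih =>
    rw [Finset.range_add_one, Finset.filter_insert]
    split_ifs with h
    · rw [Finset.card_insert_of_notMem (by simp)]; omega
    · omega

lemma cntC (N : ℕ) : ((Finset.range N).filter fun m => m % 4 = 0).card = (N + 3) / 4 := by
  induction N with
  | zero => simp
  | succ N ih =>
    rw [Finset.range_add_one, Finset.filter_insert]
    split_ifs with h
    · rw [Finset.card_insert_of_notMem (by simp)]; omega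
    · omega

-- the pair-counting function
def Fcnt (a b : ℕ) : ℕ :=
  ∑ l ∈ Finset.range (a + 1),
    ((Finset.range (b + 1)).filter fun m => Nat.choose (l + m) l % 2 = 1).card

-- fiber bounds
lemma fiber0 (b : ℕ) :
    ((Finset.range (b + 1)).filter fun m => Nat.choose (0 + m) 0 % 2 = 1).card = b + 1 := by
  rw [Finset.filter_true_of_mem (fun m _ => by simp)]
  simp

lemma fiber1 (b : ℕ) :
    ((Finset.range (b + 1)).filter fun m => Nat.choose (1 + m) 1 % 2 = 1).card = (b + 2) / 2 := by
  have : ∀ m, Nat.choose (1 + m) 1 % 2 = 1 ↔ m % 2 = 0 := by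
    intro m
    rw [Nat.choose_one_right]
    omega
  rw [Finset.filter_congr (fun m _ => by rw [this])]
  rw [cnt2]

lemma fiber2 (b : ℕ) :
    ((Finset.range (b + 1)).filter fun m => Nat.choose (2 + m) 2 % 2 = 1).card
      = (b + 4) / 4 + (b + 3) / 4 := by
  have : ∀ m, Nat.choose (2 + m) 2 % 2 = 1 ↔ m % 4 ≤ 1 := by
    intro m
    rw [par 2 m, if_neg (by omega)]
    norm_num
    omega
  rw [Finset.filter_congr (fun m _ => by rw [this]), cntB]

lemma fiber3 (b : ℕ) :
    (b + 4) / 4 ≤ ((Finset.range (b + 1)).filter fun m => Nat.choose (3 + m) 3 % 2 = 1).card := by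
  have : ((Finset.range (b + 1)).filter fun m => m % 4 = 0)
      ⊆ ((Finset.range (b + 1)).filter fun m => Nat.choose (3 + m) 3 % 2 = 1) := by
    intro m hm
    simp only [Finset.mem_filter, Finset.mem_range] at hm ⊢
    refine ⟨hm.1, ?_⟩
    rw [par 3 m, if_neg (by omega)]
    norm_num
    omega
  calc (b + 4) / 4 = ((Finset.range (b + 1)).filter fun m => m % 4 = 0).card := (cntC (b + 1)).symm
    _ ≤ _ := Finset.card_le_card this

lemma fiber_tail (b l : ℕ) (hb : 3 ≤ b) :
    (1 + (if l % 2 = 0 then 1 else 0) + (if l % 4 ≤ 1 then 1 else 0)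
        + (if l % 4 = 0 then 1 else 0))
      ≤ ((Finset.range (b + 1)).filter fun m => Nat.choose (l + m) l % 2 = 1).card := by
  have mem0 : (0 : ℕ) ∈ (Finset.range (b + 1)).filter fun m => Nat.choose (l + m) l % 2 = 1 := by
    simp only [Finset.mem_filter, Finset.mem_range]
    exact ⟨by omega, odd_self l⟩
  have h4 : l % 4 = 0 ∨ l % 4 = 1 ∨ l % 4 = 2 ∨ l % 4 = 3 := by omega
  rcases h4 with h | h | h | h
  · rw [if_pos (by omega), if_pos (by omega), if_pos h]
    have hs : ({0, 1, 2, 3} : Finset ℕ)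
        ⊆ (Finset.range (b + 1)).filter fun m => Nat.choose (l + m) l % 2 = 1 := by
      intro m hm
      simp only [Finset.mem_insert, Finset.mem_singleton] at hm
      simp only [Finset.mem_filter, Finset.mem_range]
      rcases hm with rfl | rfl | rfl | rfl
      · exact ⟨by omega, odd_self l⟩
      · exact ⟨by omega, odd_succ_self l (by omega)⟩
      · exact ⟨by omega, odd_two l (by omega)⟩
      · exact ⟨by omega, odd_three l h⟩
    have := Finset.card_le_card hs
    simpa using this
  · rw [if_neg (by omega), if_pos (by omega), if_neg (by omega)]
    have hs : ({0, 2} : Finset ℕ)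
        ⊆ (Finset.range (b + 1)).filter fun m => Nat.choose (l + m) l % 2 = 1 := by
      intro m hm
      simp only [Finset.mem_insert, Finset.mem_singleton] at hm
      simp only [Finset.mem_filter, Finset.mem_range]
      rcases hm with rfl | rfl
      · exact ⟨by omega, odd_self l⟩
      · exact ⟨by omega, odd_two l (by omega)⟩
    have := Finset.card_le_card hs
    simpa using this
  · rw [if_pos (by omega), if_neg (by omega), if_neg (by omega)]
    have hs : ({0, 1} : Finset ℕ)
        ⊆ (Finset.range (b + 1)).filter fun m => Nat.choose (l + m) l % 2 = 1 := by
      intro m hm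
      simp only [Finset.mem_insert, Finset.mem_singleton] at hm
      simp only [Finset.mem_filter, Finset.mem_range]
      rcases hm with rfl | rfl
      · exact ⟨by omega, odd_self l⟩
      · exact ⟨by omega, odd_succ_self l (by omega)⟩
    have := Finset.card_le_card hs
    simpa using this
  · rw [if_neg (by omega), if_neg (by omega), if_neg (by omega)]
    have := Finset.card_le_card (Finset.singleton_subset_iff.mpr mem0)
    simpa using this

lemma sum_lb (N : ℕ) :
    ∑ l ∈ Finset.range N,
      (1 + (if l % 2 = 0 then 1 else 0) + (if l % 4 ≤ 1 then 1 else 0)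
        + (if l % 4 = 0 then 1 else 0))
      = N + (N + 1) / 2 + ((N + 3) / 4 + (N + 2) / 4) + (N + 3) / 4 := by
  induction N with
  | zero => simp
  | succ N ih =>
    rw [Finset.sum_range_succ, ih]
    split_ifs <;> omega

lemma arith (a b h3 tl : ℕ) (ha : 4 ≤ a) (hab : a ≤ b)
    (e3 : (b + 4) / 4 ≤ h3)
    (ht : (a + 1) + (a + 2) / 2 + ((a + 4) / 4 + (a + 3) / 4) + (a + 4) / 4 - 9 ≤ tl) :
    2 * (a + b) - 1 + (if (a + b) % 2 = 1 then 1 else 0)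
      ≤ (b + 1) + (b + 2) / 2 + ((b + 4) / 4 + (b + 3) / 4) + h3 + tl := by
  rcases (by omega : a % 4 = 0 ∨ a % 4 = 1 ∨ a % 4 = 2 ∨ a % 4 = 3) with h1 | h1 | h1 | h1 <;>
    rcases (by omega : b % 4 = 0 ∨ b % 4 = 1 ∨ b % 4 = 2 ∨ b % 4 = 3) with h2 | h2 | h2 | h2 <;>
    split_ifs <;> omega

lemma Fcnt_ge (a b : ℕ) (ha : 4 ≤ a) (hab : a ≤ b) :
    2 * (a + b) - 1 + (if (a + b) % 2 = 1 then 1 else 0) ≤ Fcnt a b := by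
  have hsplit : Fcnt a b =
      (∑ l ∈ Finset.range 4,
        ((Finset.range (b + 1)).filter fun m => Nat.choose (l + m) l % 2 = 1).card)
      + ∑ l ∈ Finset.Ico 4 (a + 1),
        ((Finset.range (b + 1)).filter fun m => Nat.choose (l + m) l % 2 = 1).card := by
    rw [Fcnt, Finset.range_eq_Ico,
      ← Finset.sum_Ico_consecutive _ (by omega : 0 ≤ 4) (by omega : 4 ≤ a + 1),
      ← Finset.range_eq_Ico]
  have hhead : (∑ l ∈ Finset.range 4,
      ((Finset.range (b + 1)).filter fun m => Nat.choose (l + m) l % 2 = 1).card)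
      = ((Finset.range (b+1)).filter fun m => Nat.choose (0 + m) 0 % 2 = 1).card
      + ((Finset.range (b+1)).filter fun m => Nat.choose (1 + m) 1 % 2 = 1).card
      + ((Finset.range (b+1)).filter fun m => Nat.choose (2 + m) 2 % 2 = 1).card
      + ((Finset.range (b+1)).filter fun m => Nat.choose (3 + m) 3 % 2 = 1).card := by
    rw [Finset.sum_range_succ, Finset.sum_range_succ, Finset.sum_range_succ,
      Finset.sum_range_succ, Finset.sum_range_zero]
    ring
  have htail : ∑ l ∈ Finset.Ico 4 (a + 1),
      (1 + (if l % 2 = 0 then 1 else 0) + (if l % 4 ≤ 1 then 1 else 0)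
        + (if l % 4 = 0 then 1 else 0))
      ≤ ∑ l ∈ Finset.Ico 4 (a + 1),
        ((Finset.range (b + 1)).filter fun m => Nat.choose (l + m) l % 2 = 1).card :=
    Finset.sum_le_sum fun l _ => fiber_tail b l (by omega)
  have htail2 : ∑ l ∈ Finset.Ico 4 (a + 1),
      (1 + (if l % 2 = 0 then 1 else 0) + (if l % 4 ≤ 1 then 1 else 0)
        + (if l % 4 = 0 then 1 else 0))
      = ((a+1) + (a + 2) / 2 + ((a + 4) / 4 + (a + 3) / 4) + (a + 4) / 4) - 9 := by
    have h1 := sum_lb (a + 1)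
    have h2 : ∑ l ∈ Finset.range 4,
        (1 + (if l % 2 = 0 then 1 else 0) + (if l % 4 ≤ 1 then 1 else 0)
          + (if l % 4 = 0 then 1 else 0)) = 9 := by decide
    have h3 : ∑ l ∈ Finset.range (a+1),
        (1 + (if l % 2 = 0 then 1 else 0) + (if l % 4 ≤ 1 then 1 else 0)
          + (if l % 4 = 0 then 1 else 0))
        = 9 + ∑ l ∈ Finset.Ico 4 (a + 1),
          (1 + (if l % 2 = 0 then 1 else 0) + (if l % 4 ≤ 1 then 1 else 0)
            + (if l % 4 = 0 then 1 else 0)) := by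
      rw [← h2, Finset.range_eq_Ico,
        ← Finset.sum_Ico_consecutive _ (by omega : 0 ≤ 4) (by omega : 4 ≤ a + 1),
        ← Finset.range_eq_Ico]
    omega
  have e3 := fiber3 b
  rw [hsplit, hhead, fiber0 b, fiber1 b, fiber2 b]
  exact arith a b _ _ ha hab e3 (htail2 ▸ htail)

lemma entry (n k : ℕ) : ∀ (j : ℕ) (i : Fin (n - j)),
    derIter (e n k) j i = if i.1 ≤ k then ((Nat.choose j (k - i.1) : ℕ) : ZMod 2) else 0
  | 0, i => by
    show e n k i = _
    unfold e
    rcases lt_trichotomy i.1 k with h | h | h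
    · rw [if_neg (by omega), if_pos (by omega), Nat.choose_eq_zero_of_lt (by omega)]
      simp
    · rw [if_pos h, if_pos (by omega)]
      simp [h]
    · rw [if_neg (by omega), if_neg (by omega)]
  | j + 1, i => by
    have h1 : derIter (e n k) (j + 1) i
        = derIter (e n k) j ⟨i.1, by have := i.2; omega⟩
          + derIter (e n k) j ⟨i.1 + 1, by have := i.2; omega⟩ := rfl
    rw [h1, entry n k j, entry n k j]
    simp only
    rcases lt_trichotomy i.1 k with h | h | h
    · rcases Nat.lt_or_ge (i.1 + 1) (k + 1) with h2 | h2
      · rw [if_pos (by omega), if_pos (by omega), if_pos (by omega)]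
        have hs : k - i.1 = (k - (i.1 + 1)) + 1 := by omega
        rw [hs, Nat.choose_succ_succ, Nat.cast_add, add_comm]
      · omega
    · rw [if_pos (by omega), if_neg (by omega), if_pos (by omega)]
      have h0 : k - i.1 = 0 := by omega
      rw [h0]
      simp
    · rw [if_neg (by omega), if_neg (by omega), if_neg (by omega)]
      simp

lemma cast_one_iff (a : ℕ) : ((a : ZMod 2) = 1) ↔ a % 2 = 1 := by
  rw [← ZMod.natCast_mod a 2]
  rcases Nat.mod_two_eq_zero_or_one a with h | h <;> rw [h] <;> simp <;> decide

lemma wt_row_s6 (n k j : ℕ) :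
    wt (derIter (e n k) j) =
      ((Finset.range (n - j)).filter fun i => i ≤ k ∧ Nat.choose j (k - i) % 2 = 1).card := by
  unfold wt
  apply Finset.card_bij (fun i _ => i.1)
  · intro i hi
    simp only [Finset.mem_filter, Finset.mem_univ, true_and] at hi
    rw [entry] at hi
    simp only [Finset.mem_filter, Finset.mem_range]
    split_ifs at hi with h
    · exact ⟨i.2, h, (cast_one_iff _).1 hi⟩
    · exact absurd hi (by decide)
  · intro i _ i' _ h
    exact Fin.val_injective h
  · intro b hb
    simp only [Finset.mem_filter, Finset.mem_range] at hb
    refine ⟨⟨b, hb.1⟩, ?_, rfl⟩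
    simp only [Finset.mem_filter, Finset.mem_univ, true_and]
    rw [entry]
    rw [if_pos hb.2.1]
    exact (cast_one_iff _).2 hb.2.2

lemma tw_eq (n k : ℕ) (hkn : k + 1 ≤ n) : tw (e n k) = Fcnt k (n - 1 - k) := by
  have hL : tw (e n k) = ((Finset.range n).sigma fun j =>
      (Finset.range (n - j)).filter fun i => i ≤ k ∧ Nat.choose j (k - i) % 2 = 1).card := by
    rw [Finset.card_sigma]
    exact Finset.sum_congr rfl fun j _ => wt_row_s6 n k j
  have hR : Fcnt k (n - 1 - k) = ((Finset.range (k + 1)).sigma fun l =>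
      (Finset.range (n - 1 - k + 1)).filter fun m => Nat.choose (l + m) l % 2 = 1).card := by
    rw [Finset.card_sigma]
    rfl
  rw [hL, hR]
  apply Finset.card_bij (fun p _ => (⟨k - p.2, p.1 - (k - p.2)⟩ : (_ : ℕ) × ℕ))
  · intro p hp
    simp only [Finset.mem_sigma, Finset.mem_filter, Finset.mem_range] at hp ⊢
    obtain ⟨hj, hi, hik, hodd⟩ := hp
    have hlj : k - p.2 ≤ p.1 := by
      by_contra hc
      rw [Nat.choose_eq_zero_of_lt (by omega)] at hodd
      omega
    refine ⟨by omega, by omega, ?_⟩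
    have : k - p.2 + (p.1 - (k - p.2)) = p.1 := by omega
    rw [this]
    exact hodd
  · intro p hp p' hp' h
    simp only [Finset.mem_sigma, Finset.mem_filter, Finset.mem_range] at hp hp'
    obtain ⟨hj, hi, hik, hodd⟩ := hp
    obtain ⟨hj', hi', hik', hodd'⟩ := hp'
    have hlj : k - p.2 ≤ p.1 := by
      by_contra hc
      rw [Nat.choose_eq_zero_of_lt (by omega)] at hodd
      omega
    have hlj' : k - p'.2 ≤ p'.1 := by
      by_contra hc
      rw [Nat.choose_eq_zero_of_lt (by omega)] at hodd'
      omega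
    have h1 : k - p.2 = k - p'.2 := congrArg Sigma.fst h
    have h2 : p.1 - (k - p.2) = p'.1 - (k - p'.2) := by
      have := congrArg Sigma.snd h
      simpa using this
    have e1 : p.1 = p'.1 := by omega
    have e2 : p.2 = p'.2 := by omega
    exact Sigma.ext e1 (by rw [e2])
  · intro q hq
    simp only [Finset.mem_sigma, Finset.mem_filter, Finset.mem_range] at hq
    obtain ⟨hl, hm, hodd⟩ := hq
    refine ⟨⟨q.1 + q.2, k - q.1⟩, ?_, ?_⟩
    · simp only [Finset.mem_sigma, Finset.mem_filter, Finset.mem_range]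
      refine ⟨by omega, by omega, by omega, ?_⟩
      have h1 : k - (k - q.1) = q.1 := by omega
      rw [h1]
      exact hodd
    · have h1 : k - (k - q.1) = q.1 := by omega
      have h2 : q.1 + q.2 - (k - (k - q.1)) = q.2 := by omega
      exact Sigma.ext h1.symm (by simp [h1]) |>.symm

theorem stmt6 (n k : ℕ) (hk : 4 ≤ k) (hn : 9 ≤ n) (hkn : 2 * k ≤ n - 1) :
    2 * n - 3 ≤ tw (e n k) ∧ (Even n → 2 * n - 3 < tw (e n k)) := by
  have ht := tw_eq n k (by omega)
  have hF := Fcnt_ge k (n - 1 - k) hk (by omega)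
  rw [ht]
  have hsum : k + (n - 1 - k) = n - 1 := by omega
  rw [hsum] at hF
  constructor
  · omega
  · intro he
    have : n % 2 = 0 := Nat.even_iff.mp he
    have hodd : (n - 1) % 2 = 1 := by omega
    rw [if_pos hodd] at hF
    omega
end

section
/- Let n ≥ 9 be odd. Then the second smallest positive weight of a Steinhaus triangle of size n is (3n-3)/2, attained exactly by the three sequences b₂ = (0,1,0,…,0), b₄ = (0,1,0,1,…), b₆ = (0,…,0,1,0), and the third smallest positive weight is (3n-1)/2, attained exactly by b₁ = (1,0,1,0,…), b₃ = (0,…,0,1,1), b₅ = (1,1,0,…,0). -/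
/-- `b₁` : alternating sequence starting with 1, i.e. `1010…`. -/
def b1 (n : ℕ) : Fin n → ZMod 2 := fun i => if i.1 % 2 = 0 then 1 else 0
/-- `b₂` : single one in position 1. -/
def b2 (n : ℕ) : Fin n → ZMod 2 := e n 1
/-- `b₃` : ones in positions n-2 and n-1. -/
def b3 (n : ℕ) : Fin n → ZMod 2 := fun i => if i.1 = n - 2 ∨ i.1 = n - 1 then 1 else 0
/-- `b₄` : alternating sequence starting with 0, i.e. `0101…`. -/
def b4 (n : ℕ) : Fin n → ZMod 2 := fun i => if i.1 % 2 = 1 then 1 else 0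
/-- `b₅` : ones in positions 0 and 1. -/
def b5 (n : ℕ) : Fin n → ZMod 2 := fun i => if i.1 = 0 ∨ i.1 = 1 then 1 else 0
/-- `b₆` : single one in position n-2. -/
def b6 (n : ℕ) : Fin n → ZMod 2 := e n (n - 2)
/-! ### Auxiliary patterns -/

def q23 (n : ℕ) : Fin n → ZMod 2 := fun i => if i.1 % 4 = 2 ∨ i.1 % 4 = 3 then 1 else 0
def q12 (n : ℕ) : Fin n → ZMod 2 := fun i => if i.1 % 4 = 1 ∨ i.1 % 4 = 2 then 1 else 0

/-! ### ZMod 2 basics -/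

lemma z2_cases (a : ZMod 2) : a = 0 ∨ a = 1 := by revert a; decide

/-! ### weight lemmas -/

lemma wt_pos {L : ℕ} {y : Fin L → ZMod 2} (h : y ≠ fun _ => 0) : 1 ≤ wt y := by
  have h1 : ∃ i, y i ≠ 0 := by
    by_contra hc
    push_neg at hc
    exact h (funext hc)
  obtain ⟨i, hi⟩ := h1
  have h2 : y i = 1 := by rcases z2_cases (y i) with h' | h' <;> simp [h'] at hi ⊢
  have : 0 < (Finset.univ.filter fun i => y i = 1).card :=
    Finset.card_pos.mpr ⟨i, Finset.mem_filter.mpr ⟨Finset.mem_univ _, h2⟩⟩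
  unfold wt
  omega

lemma wt_if {L : ℕ} (P : ℕ → Prop) [DecidablePred P] :
    wt (fun i : Fin L => if P i.1 then (1 : ZMod 2) else 0) =
      ((Finset.range L).filter P).card := by
  unfold wt
  rw [Finset.card_filter, Finset.card_filter, ← Fin.sum_univ_eq_sum_range]
  apply Finset.sum_congr rfl
  intro i _
  by_cases h : P i.1 <;> simp [h]

lemma cnt_mod2_one (L : ℕ) : ((Finset.range L).filter (fun i => i % 2 = 1)).card = L / 2 := by
  induction L with
  | zero => simp
  | succ M ih =>
    rw [Finset.range_add_one, Finset.filter_insert]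
    by_cases h : M % 2 = 1
    · rw [if_pos h, Finset.card_insert_of_notMem (by simp)]
      omega
    · rw [if_neg h]
      omega

lemma cnt_mod2_zero (L : ℕ) : ((Finset.range L).filter (fun i => i % 2 = 0)).card = L - L / 2 := by
  induction L with
  | zero => simp
  | succ M ih =>
    rw [Finset.range_add_one, Finset.filter_insert]
    by_cases h : M % 2 = 0
    · rw [if_pos h, Finset.card_insert_of_notMem (by simp)]
      omega
    · rw [if_neg h]
      omega

lemma cnt_eq (j L : ℕ) (h : j < L) : ((Finset.range L).filter (fun i => i = j)).card = 1 := by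
  rw [Finset.filter_eq']
  simp [Finset.mem_range.mpr h]

lemma cnt_pair {a b L : ℕ} (hab : a ≠ b) (ha : a < L) (hb : b < L) :
    ((Finset.range L).filter (fun i => i = a ∨ i = b)).card = 2 := by
  have : (Finset.range L).filter (fun i => i = a ∨ i = b) = {a, b} := by
    ext i
    simp only [Finset.mem_filter, Finset.mem_range, Finset.mem_insert, Finset.mem_singleton]
    constructor
    · rintro ⟨_, h⟩; exact h
    · rintro (rfl | rfl)
      · exact ⟨ha, Or.inl rfl⟩
      · exact ⟨hb, Or.inr rfl⟩
  rw [this, Finset.card_pair hab]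

lemma wt_zero_seq {L : ℕ} : wt (fun _ : Fin L => (0 : ZMod 2)) = 0 := by
  unfold wt
  rw [Finset.card_eq_zero, Finset.filter_eq_empty_iff]
  intro i _
  exact fun h => (by decide : ¬((0 : ZMod 2) = 1)) h

lemma wt_one_seq {L : ℕ} : wt (fun _ : Fin L => (1 : ZMod 2)) = L := by
  unfold wt
  rw [Finset.filter_true_of_mem (by intro i _; rfl)]
  simp

lemma wt_e_s13 {L k : ℕ} (h : k < L) : wt (e L k) = 1 := by
  have := wt_if (L := L) (fun j => j = k)
  unfold e
  exact this.trans (cnt_eq k L h)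

lemma wt_b4 (L : ℕ) : wt (b4 L) = L / 2 := by
  have := wt_if (L := L) (fun j => j % 2 = 1)
  unfold b4
  exact this.trans (cnt_mod2_one L)

lemma wt_b1 (L : ℕ) : wt (b1 L) = L - L / 2 := by
  have := wt_if (L := L) (fun j => j % 2 = 0)
  unfold b1
  exact this.trans (cnt_mod2_zero L)

lemma wt_b5 {L : ℕ} (h : 2 ≤ L) : wt (b5 L) = 2 := by
  have := wt_if (L := L) (fun j => j = 0 ∨ j = 1)
  unfold b5
  exact this.trans (cnt_pair (by omega) (by omega) (by omega))

lemma wt_b3 {L : ℕ} (h : 2 ≤ L) : wt (b3 L) = 2 := by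
  have := wt_if (L := L) (fun j => j = L - 2 ∨ j = L - 1)
  unfold b3
  exact this.trans (cnt_pair (by omega) (by omega) (by omega))

lemma wt_two_ind {L a b : ℕ} (hab : a ≠ b) (ha : a < L) (hb : b < L) :
    wt (fun i : Fin L => if i.1 = a ∨ i.1 = b then (1 : ZMod 2) else 0) = 2 := by
  exact (wt_if (L := L) (fun j => j = a ∨ j = b)).trans (cnt_pair hab ha hb)

lemma wt_cp {L : ℕ} (y : Fin L → ZMod 2) : wt (fun i => y i + 1) = L - wt y := by
  unfold wt
  have h1 : (Finset.univ.filter fun i : Fin L => y i + 1 = 1) =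
      Finset.univ.filter fun i : Fin L => ¬(y i = 1) := by
    apply Finset.filter_congr
    intro i _
    rcases z2_cases (y i) with h | h <;> rw [h] <;> decide
  rw [h1, Finset.filter_not, Finset.card_sdiff_of_subset (Finset.filter_subset _ _)]
  simp

lemma wt_ge4 {L : ℕ} {y : Fin L → ZMod 2} {a b c d : ℕ}
    (hab : a < b) (hbc : b < c) (hcd : c < d) (hdL : d < L)
    (va : y ⟨a, by omega⟩ = 1) (vb : y ⟨b, by omega⟩ = 1)
    (vc : y ⟨c, by omega⟩ = 1) (vd : y ⟨d, by omega⟩ = 1) : 4 ≤ wt y := by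
  have haL : a < L := by omega
  have hbL : b < L := by omega
  have hcL : c < L := by omega
  set S : Finset (Fin L) := {⟨a, haL⟩, ⟨b, hbL⟩, ⟨c, hcL⟩, ⟨d, hdL⟩} with hS
  have hcard : S.card = 4 := by
    rw [hS]
    rw [Finset.card_insert_of_notMem (by simp [Fin.ext_iff]; omega),
      Finset.card_insert_of_notMem (by simp [Fin.ext_iff]; omega),
      Finset.card_insert_of_notMem (by simp [Fin.ext_iff]; omega),
      Finset.card_singleton]
  have hsub : S ⊆ Finset.univ.filter fun i => y i = 1 := by
    intro i hi
    rw [hS] at hi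
    simp only [Finset.mem_insert, Finset.mem_singleton] at hi
    rcases hi with rfl | rfl | rfl | rfl <;>
      exact Finset.mem_filter.mpr ⟨Finset.mem_univ _, by assumption⟩
  calc 4 = S.card := hcard.symm
    _ ≤ _ := Finset.card_le_card hsub

lemma wt_eq_one {L : ℕ} {x : Fin L → ZMod 2} (h : wt x = 1) :
    ∃ j, ∃ _ : j < L, x = e L j := by
  unfold wt at h
  obtain ⟨i0, hi0⟩ := Finset.card_eq_one.mp h
  have hx1 : x i0 = 1 := by
    have : i0 ∈ Finset.univ.filter fun i => x i = 1 := by rw [hi0]; exact Finset.mem_singleton_self _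
    exact (Finset.mem_filter.mp this).2
  refine ⟨i0.1, i0.2, funext fun i => ?_⟩
  unfold e
  by_cases hii : i = i0
  · subst hii
    simp [hx1]
  · have hne : x i ≠ 1 := by
      intro hc
      have : i ∈ Finset.univ.filter fun i => x i = 1 := Finset.mem_filter.mpr ⟨Finset.mem_univ _, hc⟩
      rw [hi0, Finset.mem_singleton] at this
      exact hii this
    have hx0 : x i = 0 := by rcases z2_cases (x i) with h' | h'; exact h'; exact absurd h' hne
    have : ¬(i.1 = i0.1) := fun hc => hii (Fin.ext hc)
    simp [hx0, this]
/-! ### derivative computations -/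

lemma der_zero {L : ℕ} : der (fun _ : Fin L => (0 : ZMod 2)) = fun _ => 0 := by
  funext i
  show (0 : ZMod 2) + 0 = 0
  decide

lemma der_one {L : ℕ} : der (fun _ : Fin L => (1 : ZMod 2)) = fun _ => 0 := by
  funext i
  show (1 : ZMod 2) + 1 = 0
  decide

lemma der_cp {L : ℕ} (y : Fin L → ZMod 2) : der (fun i => y i + 1) = der y := by
  funext i
  show _ + 1 + (_ + 1) = _
  have h : ∀ a b : ZMod 2, a + 1 + (b + 1) = a + b := by decide
  apply h

lemma cp_b4 {L : ℕ} : (fun i => b4 L i + 1) = b1 L := by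
  funext i
  simp only [b4, b1]
  rcases Nat.even_or_odd i.1 with h | h
  · have h0 : i.1 % 2 = 0 := Nat.even_iff.mp h
    rw [if_neg (by omega), if_pos h0]
    decide
  · have h1 : i.1 % 2 = 1 := Nat.odd_iff.mp h
    rw [if_pos h1, if_neg (by omega)]
    decide

lemma der_b4 {L : ℕ} : der (b4 L) = fun _ => 1 := by
  funext i
  simp only [der, b4]
  have h : i.1 % 2 = 0 ∨ i.1 % 2 = 1 := by omega
  rcases h with h | h
  · rw [if_neg (by omega), if_pos (by omega)]
    decide
  · rw [if_pos h, if_neg (by omega)]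
    decide

lemma der_b1 {L : ℕ} : der (b1 L) = fun _ => 1 := by
  funext i
  simp only [der, b1]
  have h : i.1 % 2 = 0 ∨ i.1 % 2 = 1 := by omega
  rcases h with h | h
  · rw [if_pos h, if_neg (by omega)]
    decide
  · rw [if_neg (by omega), if_pos (by omega)]
    decide

lemma der_q23 {L : ℕ} : der (q23 L) = b4 (L - 1) := by
  funext i
  simp only [der, q23, b4]
  have h : i.1 % 4 = 0 ∨ i.1 % 4 = 1 ∨ i.1 % 4 = 2 ∨ i.1 % 4 = 3 := by omega
  rcases h with h | h | h | h
  · rw [if_neg (by omega), if_neg (by omega), if_neg (by omega)]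
    decide
  · rw [if_neg (by omega), if_pos (by omega), if_pos (by omega)]
    decide
  · rw [if_pos (by omega), if_pos (by omega), if_neg (by omega)]
    decide
  · rw [if_pos (by omega), if_neg (by omega), if_pos (by omega)]
    decide

lemma der_q12 {L : ℕ} : der (q12 L) = b1 (L - 1) := by
  funext i
  simp only [der, q12, b1]
  have h : i.1 % 4 = 0 ∨ i.1 % 4 = 1 ∨ i.1 % 4 = 2 ∨ i.1 % 4 = 3 := by omega
  rcases h with h | h | h | h
  · rw [if_neg (by omega), if_pos (by omega), if_pos (by omega)]
    decide
  · rw [if_pos (by omega), if_pos (by omega), if_neg (by omega)]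
    decide
  · rw [if_pos (by omega), if_neg (by omega), if_pos (by omega)]
    decide
  · rw [if_neg (by omega), if_neg (by omega), if_neg (by omega)]
    decide

lemma der_e0 {L : ℕ} (h : 2 ≤ L) : der (e L 0) = e (L - 1) 0 := by
  funext i
  simp only [der, e]
  by_cases h0 : i.1 = 0
  · rw [if_pos h0, if_neg (by omega)]
    decide
  · rw [if_neg h0, if_neg (by omega)]
    decide

lemma der_e_last {L k : ℕ} (h1 : 1 ≤ k) (hk : k + 1 = L) : der (e L k) = e (L - 1) (k - 1) := by
  funext i
  have hi : i.1 < L - 1 := i.2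
  simp only [der, e]
  by_cases h0 : i.1 = k - 1
  · rw [if_neg (by omega), if_pos (by omega), if_pos h0]
    decide
  · rw [if_neg (by omega), if_neg (by omega), if_neg h0]
    decide

lemma der_e_mid {L k : ℕ} (h1 : 1 ≤ k) (h2 : k + 2 ≤ L) :
    der (e L k) = fun i : Fin (L - 1) => if i.1 = k - 1 ∨ i.1 = k then 1 else 0 := by
  funext i
  simp only [der, e]
  by_cases ha : i.1 = k - 1
  · rw [if_neg (by omega), if_pos (by omega), if_pos (Or.inl ha)]
    decide
  · by_cases hb : i.1 = k
    · rw [if_pos hb, if_neg (by omega), if_pos (Or.inr hb)]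
      decide
    · rw [if_neg hb, if_neg (by omega), if_neg (by tauto)]
      decide

lemma der_e1 {L : ℕ} (h : 3 ≤ L) : der (e L 1) = b5 (L - 1) := by
  rw [der_e_mid (by omega) (by omega)]
  rfl

lemma der_e_pen {L : ℕ} (h : 4 ≤ L) : der (e L (L - 2)) = b3 (L - 1) := by
  rw [der_e_mid (by omega) (by omega)]
  funext i
  simp only [b3]
  rw [show L - 2 - 1 = L - 1 - 2 by omega, show L - 2 = L - 1 - 1 by omega]

lemma der_b5 {L : ℕ} : der (b5 L) = e (L - 1) 1 := by
  funext i
  simp only [der, b5, e]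
  by_cases h0 : i.1 = 0
  · rw [if_pos (Or.inl h0), if_pos (by omega), if_neg (by omega)]
    decide
  · by_cases h1 : i.1 = 1
    · rw [if_pos (Or.inr h1), if_neg (by omega), if_pos h1]
      decide
    · rw [if_neg (by tauto), if_neg (by omega), if_neg h1]
      decide

lemma der_b3 {L : ℕ} (h : 4 ≤ L) : der (b3 L) = e (L - 1) (L - 3) := by
  funext i
  have hi : i.1 < L - 1 := i.2
  simp only [der, b3, e]
  by_cases h0 : i.1 = L - 3
  · rw [if_neg (by omega), if_pos (by omega), if_pos h0]
    decide
  · by_cases h1 : i.1 = L - 2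
    · rw [if_pos (by omega), if_pos (by omega), if_neg h0]
      decide
    · rw [if_neg (by omega), if_neg (by omega), if_neg h0]
      decide

/-! ### q-pattern weight bounds -/

lemma wt_q23_ge {L : ℕ} (h : 8 ≤ L) : 4 ≤ wt (q23 L) := by
  apply wt_ge4 (a := 2) (b := 3) (c := 6) (d := 7) (by omega) (by omega) (by omega) (by omega)
  all_goals simp [q23]

lemma wt_q23c_ge {L : ℕ} (h : 6 ≤ L) : 4 ≤ wt (fun i => q23 L i + 1) := by
  apply wt_ge4 (a := 0) (b := 1) (c := 4) (d := 5) (by omega) (by omega) (by omega) (by omega)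
  all_goals simp [q23]

lemma wt_q12_ge {L : ℕ} (h : 7 ≤ L) : 4 ≤ wt (q12 L) := by
  apply wt_ge4 (a := 1) (b := 2) (c := 5) (d := 6) (by omega) (by omega) (by omega) (by omega)
  all_goals simp [q12]

lemma wt_q12c_ge {L : ℕ} (h : 8 ≤ L) : 4 ≤ wt (fun i => q12 L i + 1) := by
  apply wt_ge4 (a := 0) (b := 3) (c := 4) (d := 7) (by omega) (by omega) (by omega) (by omega)
  all_goals simp [q12]
/-! ### structure of sequences with equal derivative -/

lemma der_eq_der {L : ℕ} (h0 : 0 < L) {x v : Fin L → ZMod 2} (h : der x = der v) :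
    x = v ∨ x = fun i => v i + 1 := by
  have key : ∀ j, ∀ hj : j < L, x ⟨j, hj⟩ + v ⟨j, hj⟩ = x ⟨0, h0⟩ + v ⟨0, h0⟩ := by
    intro j
    induction j with
    | zero => intro hj; rfl
    | succ i ih =>
      intro hj
      have hi : i < L := by omega
      have hi' : i < L - 1 := by omega
      have hd := congrFun h ⟨i, hi'⟩
      simp only [der] at hd
      have swap : ∀ a b c d : ZMod 2, a + b = c + d → b + d = a + c := by decide
      have h2 := swap _ _ _ _ hd
      exact h2.trans (ih hi)
  rcases z2_cases (x ⟨0, h0⟩ + v ⟨0, h0⟩) with hc | hc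
  · left
    funext i
    have h2 := key i.1 i.2
    rw [hc] at h2
    have : ∀ a b : ZMod 2, a + b = 0 → a = b := by decide
    have h3 := this _ _ h2
    simpa using h3
  · right
    funext i
    have h2 := key i.1 i.2
    rw [hc] at h2
    have : ∀ a b : ZMod 2, a + b = 1 → a = b + 1 := by decide
    have h3 := this _ _ h2
    simpa using h3

/-! ### tw recursion -/

lemma wt_heq {a b : ℕ} (h : a = b) {f : Fin a → ZMod 2} {g : Fin b → ZMod 2}
    (hfg : HEq f g) : wt f = wt g := by
  subst h
  rw [heq_iff_eq] at hfg
  rw [hfg]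

lemma der_heq {a b : ℕ} (h : a = b) {f : Fin a → ZMod 2} {g : Fin b → ZMod 2}
    (hfg : HEq f g) : HEq (der f) (der g) := by
  subst h
  rw [heq_iff_eq] at hfg
  rw [hfg]

lemma derIter_der_heq {L : ℕ} (x : Fin L → ZMod 2) :
    ∀ j, HEq (derIter (der x) j) (derIter x (j + 1)) := by
  intro j
  induction j with
  | zero => exact HEq.rfl
  | succ j ih => exact der_heq (show L - 1 - j = L - (j + 1) by omega) ih

lemma tw_succ {L : ℕ} (h : 0 < L) (x : Fin L → ZMod 2) : tw x = wt x + tw (der x) := by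
  obtain ⟨M, rfl⟩ : ∃ M, L = M + 1 := ⟨L - 1, by omega⟩
  have h1 : tw (der x) = ∑ j ∈ Finset.range M, wt (derIter (der x) j) :=
    Finset.sum_congr (by norm_num) (fun _ _ => rfl)
  show ∑ j ∈ Finset.range (M + 1), wt (derIter x j) = _
  rw [Finset.sum_range_succ', h1]
  have h2 : ∀ j ∈ Finset.range M, wt (derIter x (j + 1)) = wt (derIter (der x) j) :=
    fun j _ => (wt_heq (by omega) (derIter_der_heq x j)).symm
  rw [Finset.sum_congr rfl h2]
  exact Nat.add_comm _ _

lemma derIter_two {L : ℕ} (x : Fin L → ZMod 2) : derIter x 2 = der (der x) := rfl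

lemma tw_two {L : ℕ} (h : 2 ≤ L) (x : Fin L → ZMod 2) :
    tw x = wt x + wt (der x) + tw (derIter x 2) := by
  rw [tw_succ (by omega) x, tw_succ (show 0 < L - 1 by omega) (der x), derIter_two]
  omega

lemma derIter_zero_seq {L : ℕ} (j : ℕ) :
    derIter (fun _ : Fin L => (0 : ZMod 2)) j = fun _ => 0 := by
  induction j with
  | zero => rfl
  | succ j ih =>
    show der (derIter (fun _ : Fin L => (0 : ZMod 2)) j) = _
    rw [ih, der_zero]
    exact rfl

lemma tw_zero_seq {L : ℕ} : tw (fun _ : Fin L => (0 : ZMod 2)) = 0 := by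
  unfold tw
  apply Finset.sum_eq_zero
  intro j _
  rw [derIter_zero_seq, wt_zero_seq]
/-! ### the induction statement -/

@[reducible] def EClass (k : ℕ) (x : Fin (2 * k + 7) → ZMod 2) : Prop :=
  x = (fun _ => 0) ∨ x = (fun _ => 1) ∨ x = e (2 * k + 7) 0 ∨ x = e (2 * k + 7) (2 * k + 6) ∨
  x = e (2 * k + 7) 1 ∨ x = e (2 * k + 7) (2 * k + 5) ∨ x = b1 (2 * k + 7) ∨
  x = b3 (2 * k + 7) ∨ x = b4 (2 * k + 7) ∨ x = b5 (2 * k + 7) ∨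
  (k = 0 ∧ x = e (2 * k + 7) 3)

@[reducible] def VALS (k : ℕ) : Prop :=
  tw (fun _ : Fin (2 * k + 7) => (0 : ZMod 2)) = 0 ∧
  tw (fun _ : Fin (2 * k + 7) => (1 : ZMod 2)) = 2 * k + 7 ∧
  tw (e (2 * k + 7) 0) = 2 * k + 7 ∧
  tw (e (2 * k + 7) (2 * k + 6)) = 2 * k + 7 ∧
  tw (e (2 * k + 7) 1) = 3 * k + 9 ∧
  tw (e (2 * k + 7) (2 * k + 5)) = 3 * k + 9 ∧
  tw (b1 (2 * k + 7)) = 3 * k + 10 ∧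
  tw (b3 (2 * k + 7)) = 3 * k + 10 ∧
  tw (b4 (2 * k + 7)) = 3 * k + 9 ∧
  tw (b5 (2 * k + 7)) = 3 * k + 10 ∧
  tw (e (2 * k + 7) 3) = if k = 0 then 9 else tw (e (2 * k + 7) 3)

@[reducible] def CLS (k : ℕ) : Prop :=
  ∀ x : Fin (2 * k + 7) → ZMod 2, tw x ≤ 3 * k + 10 → EClass k x

set_option maxHeartbeats 10000000 in
set_option maxRecDepth 1000000 in
lemma base_cls : CLS 0 := by decide

set_option maxHeartbeats 10000000 in
set_option maxRecDepth 1000000 in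
lemma base_vals : VALS 0 := by
  refine ⟨by decide, by decide, by decide, by decide, by decide, by decide, by decide,
    by decide, by decide, by decide, by decide⟩
/-! ### complement-weight helpers -/

lemma wt_cp_e {L j : ℕ} (h : j < L) : wt (fun i => e L j i + 1) = L - 1 := by
  rw [wt_cp, wt_e_s13 h]

lemma wt_cp_b3 {L : ℕ} (h : 2 ≤ L) : wt (fun i => b3 L i + 1) = L - 2 := by
  rw [wt_cp, wt_b3 h]

lemma wt_cp_b5 {L : ℕ} (h : 2 ≤ L) : wt (fun i => b5 L i + 1) = L - 2 := by
  rw [wt_cp, wt_b5 h]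

/-! ### the induction step : classification -/

lemma step_cls (k : ℕ) (ihc : CLS k) (ihv : VALS k) : CLS (k + 1) := by
  obtain ⟨v0, v1, ve0, veL, ve1, veL2, vb1, vb3, vb4, vb5, vex⟩ := ihv
  intro x hx
  have hx' : tw x ≤ 3 * k + 13 := by omega
  by_cases hx0 : x = fun _ => 0
  · exact Or.inl hx0
  have hxpos : 1 ≤ wt x := wt_pos hx0
  have htw : tw x = wt x + wt (der x) + tw (derIter x 2) := tw_two (by omega) x
  have h3 : 3 ≤ wt x + wt (der x) ∨ EClass (k + 1) x := by
    by_cases hone : wt x = 1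
    · obtain ⟨j, hj, hxe⟩ := wt_eq_one hone
      by_cases hj0 : j = 0
      · right; rw [hj0] at hxe; exact Or.inr (Or.inr (Or.inl hxe))
      by_cases hj1 : j = 1
      · right; rw [hj1] at hxe
        exact Or.inr (Or.inr (Or.inr (Or.inr (Or.inl hxe))))
      by_cases hjL : j = 2 * k + 8
      · right; rw [hjL] at hxe
        exact Or.inr (Or.inr (Or.inr (Or.inl hxe)))
      by_cases hjL2 : j = 2 * k + 7
      · right; rw [hjL2] at hxe
        exact Or.inr (Or.inr (Or.inr (Or.inr (Or.inr (Or.inl hxe)))))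
      · left
        have hder : wt (der x) = 2 := by
          rw [hxe, show der (e (2 * (k + 1) + 7) j) =
            (fun i : Fin (2 * (k + 1) + 7 - 1) =>
              if i.1 = j - 1 ∨ i.1 = j then (1 : ZMod 2) else 0) from
            der_e_mid (by omega) (by omega)]
          exact wt_two_ind (by omega) (by omega) (by omega)
        omega
    · by_cases hdx0 : der x = fun _ => 0
      · right
        have hdd : der x = der (fun _ : Fin (2 * (k + 1) + 7) => (0 : ZMod 2)) := by
          rw [der_zero]; exact hdx0
        rcases der_eq_der (by omega) hdd with hv | hv
        · exact Or.inl hv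
        · have hx1 : x = fun _ => 1 := by rw [hv]; funext i; exact zero_add 1
          exact Or.inr (Or.inl hx1)
      · left
        have h1 := wt_pos hdx0
        omega
  rcases h3 with h3 | hdone
  swap
  · exact hdone
  have hYle : tw (derIter x 2) ≤ 3 * k + 10 := by omega
  rcases ihc (derIter x 2) hYle with hY | hY | hY | hY | hY | hY | hY | hY | hY | hY | ⟨hk0, hY⟩
  -- case y = 0
  · have hdd : der (der x) = der (fun _ : Fin (2 * k + 8) => (0 : ZMod 2)) := by
      rw [der_zero]; exact hY
    rcases der_eq_der (show 0 < 2 * k + 8 by omega) hdd with hu | hu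
    · have hdd2 : der x = der (fun _ : Fin (2 * k + 9) => (0 : ZMod 2)) := by
        rw [der_zero]; exact hu
      rcases der_eq_der (show 0 < 2 * k + 9 by omega) hdd2 with hv | hv
      · exact Or.inl hv
      · have hx1 : x = fun _ => 1 := by rw [hv]; funext i; exact zero_add 1
        exact Or.inr (Or.inl hx1)
    · have hu2 : der x = fun _ => (1 : ZMod 2) := by rw [hu]; funext i; exact zero_add 1
      have hdd2 : der x = der (b4 (2 * k + 9)) := by rw [der_b4]; exact hu2
      rcases der_eq_der (show 0 < 2 * k + 9 by omega) hdd2 with hv | hv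
      · exact Or.inr (Or.inr (Or.inr (Or.inr (Or.inr (Or.inr (Or.inr (Or.inr (Or.inl hv))))))))
      · have hx1 : x = b1 (2 * k + 9) := by rw [hv]; exact cp_b4
        exact Or.inr (Or.inr (Or.inr (Or.inr (Or.inr (Or.inr (Or.inl hx1))))))
  -- case y = 1
  · exfalso
    have hty : tw (derIter x 2) = 2 * k + 7 := by rw [hY]; exact v1
    have hdd : der (der x) = der (b4 (2 * k + 8)) := by rw [der_b4]; exact hY
    rcases der_eq_der (show 0 < 2 * k + 8 by omega) hdd with hu | hu
    · have hwd : wt (der x) = (2 * k + 8) / 2 := by rw [hu]; exact wt_b4 _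
      have hdd2 : der x = der (q23 (2 * k + 9)) := by rw [der_q23]; exact hu
      rcases der_eq_der (show 0 < 2 * k + 9 by omega) hdd2 with hv | hv
      · have hwx : 4 ≤ wt x := by rw [hv]; exact wt_q23_ge (by omega)
        omega
      · have hwx : 4 ≤ wt x := by rw [hv]; exact wt_q23c_ge (by omega)
        omega
    · have hu2 : der x = b1 (2 * k + 8) := by rw [hu]; exact cp_b4
      have hwd : wt (der x) = (2 * k + 8) - (2 * k + 8) / 2 := by rw [hu2]; exact wt_b1 _
      have hdd2 : der x = der (q12 (2 * k + 9)) := by rw [der_q12]; exact hu2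
      rcases der_eq_der (show 0 < 2 * k + 9 by omega) hdd2 with hv | hv
      · have hwx : 4 ≤ wt x := by rw [hv]; exact wt_q12_ge (by omega)
        omega
      · have hwx : 4 ≤ wt x := by rw [hv]; exact wt_q12c_ge (by omega)
        omega
  -- case y = e0
  · have hty : tw (derIter x 2) = 2 * k + 7 := by rw [hY]; exact ve0
    have hdd : der (der x) = der (e (2 * k + 8) 0) := by
      rw [show der (e (2 * k + 8) 0) = e (2 * k + 7) 0 from der_e0 (by omega)]; exact hY
    rcases der_eq_der (show 0 < 2 * k + 8 by omega) hdd with hu | hu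
    · have hdd2 : der x = der (e (2 * k + 9) 0) := by
        rw [show der (e (2 * k + 9) 0) = e (2 * k + 8) 0 from der_e0 (by omega)]; exact hu
      rcases der_eq_der (show 0 < 2 * k + 9 by omega) hdd2 with hv | hv
      · exact Or.inr (Or.inr (Or.inl hv))
      · exfalso
        have hwx : wt x = 2 * k + 9 - 1 := by
          rw [hv]; exact wt_cp_e (by omega)
        have hwd : wt (der x) = 1 := by rw [hu]; exact wt_e_s13 (by omega)
        omega
    · exfalso
      have hwd : wt (der x) = 2 * k + 8 - 1 := by
        rw [hu]; exact wt_cp_e (by omega)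
      omega
  -- case y = e last
  · have hty : tw (derIter x 2) = 2 * k + 7 := by rw [hY]; exact veL
    have hdd : der (der x) = der (e (2 * k + 8) (2 * k + 7)) := by
      rw [show der (e (2 * k + 8) (2 * k + 7)) = e (2 * k + 7) (2 * k + 6) from
        der_e_last (by omega) (by omega)]
      exact hY
    rcases der_eq_der (show 0 < 2 * k + 8 by omega) hdd with hu | hu
    · have hdd2 : der x = der (e (2 * k + 9) (2 * k + 8)) := by
        rw [show der (e (2 * k + 9) (2 * k + 8)) = e (2 * k + 8) (2 * k + 7) from
          der_e_last (by omega) (by omega)]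
        exact hu
      rcases der_eq_der (show 0 < 2 * k + 9 by omega) hdd2 with hv | hv
      · exact Or.inr (Or.inr (Or.inr (Or.inl hv)))
      · exfalso
        have hwx : wt x = 2 * k + 9 - 1 := by
          rw [hv]; exact wt_cp_e (by omega)
        have hwd : wt (der x) = 1 := by rw [hu]; exact wt_e_s13 (by omega)
        omega
    · exfalso
      have hwd : wt (der x) = 2 * k + 8 - 1 := by
        rw [hu]; exact wt_cp_e (by omega)
      omega
  -- case y = e1
  · have hty : tw (derIter x 2) = 3 * k + 9 := by rw [hY]; exact ve1
    have hdd : der (der x) = der (b5 (2 * k + 8)) := by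
      rw [show der (b5 (2 * k + 8)) = e (2 * k + 7) 1 from der_b5]; exact hY
    rcases der_eq_der (show 0 < 2 * k + 8 by omega) hdd with hu | hu
    · have hdd2 : der x = der (e (2 * k + 9) 1) := by
        rw [show der (e (2 * k + 9) 1) = b5 (2 * k + 8) from der_e1 (by omega)]; exact hu
      rcases der_eq_der (show 0 < 2 * k + 9 by omega) hdd2 with hv | hv
      · exact Or.inr (Or.inr (Or.inr (Or.inr (Or.inl hv))))
      · exfalso
        have hwx : wt x = 2 * k + 9 - 1 := by
          rw [hv]; exact wt_cp_e (by omega)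
        have hwd : wt (der x) = 2 := by rw [hu]; exact wt_b5 (by omega)
        omega
    · exfalso
      have hwd : wt (der x) = 2 * k + 8 - 2 := by
        rw [hu]; exact wt_cp_b5 (by omega)
      omega
  -- case y = e (second to last)
  · have hty : tw (derIter x 2) = 3 * k + 9 := by rw [hY]; exact veL2
    have hdd : der (der x) = der (b3 (2 * k + 8)) := by
      rw [show der (b3 (2 * k + 8)) = e (2 * k + 7) (2 * k + 5) from der_b3 (by omega)]; exact hY
    rcases der_eq_der (show 0 < 2 * k + 8 by omega) hdd with hu | hu
    · have hdd2 : der x = der (e (2 * k + 9) (2 * k + 7)) := by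
        rw [show der (e (2 * k + 9) (2 * k + 7)) = b3 (2 * k + 8) from der_e_pen (by omega)]
        exact hu
      rcases der_eq_der (show 0 < 2 * k + 9 by omega) hdd2 with hv | hv
      · exact Or.inr (Or.inr (Or.inr (Or.inr (Or.inr (Or.inl hv)))))
      · exfalso
        have hwx : wt x = 2 * k + 9 - 1 := by
          rw [hv]; exact wt_cp_e (by omega)
        have hwd : wt (der x) = 2 := by rw [hu]; exact wt_b3 (by omega)
        omega
    · exfalso
      have hwd : wt (der x) = 2 * k + 8 - 2 := by
        rw [hu]; exact wt_cp_b3 (by omega)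
      omega
  -- case y = b1
  · exfalso
    have hty : tw (derIter x 2) = 3 * k + 10 := by rw [hY]; exact vb1
    have hdd : der (der x) = der (q12 (2 * k + 8)) := by
      rw [show der (q12 (2 * k + 8)) = b1 (2 * k + 7) from der_q12]; exact hY
    rcases der_eq_der (show 0 < 2 * k + 8 by omega) hdd with hu | hu
    · have hwd : 4 ≤ wt (der x) := by rw [hu]; exact wt_q12_ge (by omega)
      omega
    · have hwd : 4 ≤ wt (der x) := by rw [hu]; exact wt_q12c_ge (by omega)
      omega
  -- case y = b3
  · have hty : tw (derIter x 2) = 3 * k + 10 := by rw [hY]; exact vb3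
    have hdd : der (der x) = der (e (2 * k + 8) (2 * k + 6)) := by
      rw [show der (e (2 * k + 8) (2 * k + 6)) = b3 (2 * k + 7) from der_e_pen (by omega)]
      exact hY
    rcases der_eq_der (show 0 < 2 * k + 8 by omega) hdd with hu | hu
    · have hdd2 : der x = der (b3 (2 * k + 9)) := by
        rw [show der (b3 (2 * k + 9)) = e (2 * k + 8) (2 * k + 6) from der_b3 (by omega)]
        exact hu
      rcases der_eq_der (show 0 < 2 * k + 9 by omega) hdd2 with hv | hv
      · exact Or.inr (Or.inr (Or.inr (Or.inr (Or.inr (Or.inr (Or.inr (Or.inl hv)))))))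
      · exfalso
        have hwx : wt x = 2 * k + 9 - 2 := by
          rw [hv]; exact wt_cp_b3 (by omega)
        have hwd : wt (der x) = 1 := by rw [hu]; exact wt_e_s13 (by omega)
        omega
    · exfalso
      have hwd : wt (der x) = 2 * k + 8 - 1 := by
        rw [hu]; exact wt_cp_e (by omega)
      omega
  -- case y = b4
  · exfalso
    have hty : tw (derIter x 2) = 3 * k + 9 := by rw [hY]; exact vb4
    have hdd : der (der x) = der (q23 (2 * k + 8)) := by
      rw [show der (q23 (2 * k + 8)) = b4 (2 * k + 7) from der_q23]; exact hY
    rcases der_eq_der (show 0 < 2 * k + 8 by omega) hdd with hu | hu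
    · have hwd : 4 ≤ wt (der x) := by rw [hu]; exact wt_q23_ge (by omega)
      omega
    · have hwd : 4 ≤ wt (der x) := by rw [hu]; exact wt_q23c_ge (by omega)
      omega
  -- case y = b5
  · have hty : tw (derIter x 2) = 3 * k + 10 := by rw [hY]; exact vb5
    have hdd : der (der x) = der (e (2 * k + 8) 1) := by
      rw [show der (e (2 * k + 8) 1) = b5 (2 * k + 7) from der_e1 (by omega)]; exact hY
    rcases der_eq_der (show 0 < 2 * k + 8 by omega) hdd with hu | hu
    · have hdd2 : der x = der (b5 (2 * k + 9)) := by
        rw [show der (b5 (2 * k + 9)) = e (2 * k + 8) 1 from der_b5]; exact hu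
      rcases der_eq_der (show 0 < 2 * k + 9 by omega) hdd2 with hv | hv
      · exact Or.inr (Or.inr (Or.inr (Or.inr (Or.inr (Or.inr (Or.inr (Or.inr (Or.inr (Or.inl hv)))))))))
      · exfalso
        have hwx : wt x = 2 * k + 9 - 2 := by
          rw [hv]; exact wt_cp_b5 (by omega)
        have hwd : wt (der x) = 1 := by rw [hu]; exact wt_e_s13 (by omega)
        omega
    · exfalso
      have hwd : wt (der x) = 2 * k + 8 - 1 := by
        rw [hu]; exact wt_cp_e (by omega)
      omega
  -- extra case : k = 0, y = e 7 3
  · exfalso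
    subst hk0
    have hty : tw (derIter x 2) = 9 := by rw [hY]; simpa using vex
    have hdd : der (der x) =
        der (fun i : Fin 8 => if 4 ≤ i.1 then (1 : ZMod 2) else 0) := by
      rw [show der (fun i : Fin 8 => if 4 ≤ i.1 then (1 : ZMod 2) else 0) = e (2 * 0 + 7) 3
        from by decide]
      exact hY
    rcases der_eq_der (show 0 < 8 by omega) hdd with hu | hu
    · have hwd : wt (der x) = 4 := by rw [hu]; decide
      omega
    · have hwd : wt (der x) = 4 := by rw [hu]; decide
      omega
/-! ### the induction step : values -/

lemma tw_two_eq {B : ℕ} (x : Fin (B + 2) → ZMod 2) (u : Fin (B + 1) → ZMod 2)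
    (v : Fin B → ZMod 2) (hu : der x = u) (hv : der u = v) :
    tw x = wt x + wt u + tw v := by
  have h1 : tw (derIter x 2) = tw v := by rw [derIter_two, hu, hv]
  rw [tw_two (by omega) x, hu, h1]

lemma step_vals (k : ℕ) (ihv : VALS k) : VALS (k + 1) := by
  obtain ⟨v0, v1, ve0, veL, ve1, veL2, vb1, vb3, vb4, vb5, -⟩ := ihv
  refine ⟨tw_zero_seq, ?_, ?_, ?_, ?_, ?_, ?_, ?_, ?_, ?_, ?_⟩
  · -- all ones
    have H : tw (fun _ : Fin (2 * (k + 1) + 7) => (1 : ZMod 2)) =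
        wt (fun _ : Fin (2 * (k + 1) + 7) => (1 : ZMod 2)) +
        wt (fun _ : Fin (2 * k + 8) => (0 : ZMod 2)) +
        tw (fun _ : Fin (2 * k + 7) => (0 : ZMod 2)) :=
      tw_two_eq _ _ _ der_one der_zero
    rw [H, wt_one_seq, wt_zero_seq, tw_zero_seq]
  · -- e 0
    have H : tw (e (2 * (k + 1) + 7) 0) =
        wt (e (2 * (k + 1) + 7) 0) + wt (e (2 * k + 8) 0) + tw (e (2 * k + 7) 0) :=
      tw_two_eq _ _ _ (der_e0 (by omega)) (der_e0 (by omega))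
    rw [H, wt_e_s13 (by omega), wt_e_s13 (by omega), ve0]
    omega
  · -- e last
    have H : tw (e (2 * (k + 1) + 7) (2 * (k + 1) + 6)) =
        wt (e (2 * (k + 1) + 7) (2 * (k + 1) + 6)) + wt (e (2 * k + 8) (2 * k + 7)) +
        tw (e (2 * k + 7) (2 * k + 6)) :=
      tw_two_eq _ _ _ (der_e_last (by omega) (by omega)) (der_e_last (by omega) (by omega))
    rw [H, wt_e_s13 (by omega), wt_e_s13 (by omega), veL]
    omega
  · -- e 1
    have H : tw (e (2 * (k + 1) + 7) 1) =
        wt (e (2 * (k + 1) + 7) 1) + wt (b5 (2 * k + 8)) + tw (e (2 * k + 7) 1) :=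
      tw_two_eq _ _ _ (der_e1 (by omega)) der_b5
    rw [H, wt_e_s13 (by omega), wt_b5 (by omega), ve1]
    omega
  · -- e second-to-last
    have H : tw (e (2 * (k + 1) + 7) (2 * (k + 1) + 5)) =
        wt (e (2 * (k + 1) + 7) (2 * (k + 1) + 5)) + wt (b3 (2 * k + 8)) +
        tw (e (2 * k + 7) (2 * k + 5)) :=
      tw_two_eq _ _ _ (der_e_pen (by omega)) (der_b3 (by omega))
    rw [H, wt_e_s13 (by omega), wt_b3 (by omega), veL2]
    omega
  · -- b1
    have H : tw (b1 (2 * (k + 1) + 7)) =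
        wt (b1 (2 * (k + 1) + 7)) + wt (fun _ : Fin (2 * k + 8) => (1 : ZMod 2)) +
        tw (fun _ : Fin (2 * k + 7) => (0 : ZMod 2)) :=
      tw_two_eq _ _ _ der_b1 der_one
    rw [H, wt_b1, wt_one_seq, tw_zero_seq]
    omega
  · -- b3
    have H : tw (b3 (2 * (k + 1) + 7)) =
        wt (b3 (2 * (k + 1) + 7)) + wt (e (2 * k + 8) (2 * k + 6)) + tw (b3 (2 * k + 7)) :=
      tw_two_eq _ _ _ (der_b3 (by omega)) (der_e_pen (by omega))
    rw [H, wt_b3 (by omega), wt_e_s13 (by omega), vb3]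
    omega
  · -- b4
    have H : tw (b4 (2 * (k + 1) + 7)) =
        wt (b4 (2 * (k + 1) + 7)) + wt (fun _ : Fin (2 * k + 8) => (1 : ZMod 2)) +
        tw (fun _ : Fin (2 * k + 7) => (0 : ZMod 2)) :=
      tw_two_eq _ _ _ der_b4 der_one
    rw [H, wt_b4, wt_one_seq, tw_zero_seq]
    omega
  · -- b5
    have H : tw (b5 (2 * (k + 1) + 7)) =
        wt (b5 (2 * (k + 1) + 7)) + wt (e (2 * k + 8) 1) + tw (b5 (2 * k + 7)) :=
      tw_two_eq _ _ _ der_b5 (der_e1 (by omega))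
    rw [H, wt_b5 (by omega), wt_e_s13 (by omega), vb5]
    omega
  · -- the (vacuous) exceptional value
    rw [if_neg (by omega)]

lemma main_ind : ∀ k : ℕ, CLS k ∧ VALS k := by
  intro k
  induction k with
  | zero => exact ⟨base_cls, base_vals⟩
  | succ k ih => exact ⟨step_cls k ih.1 ih.2, step_vals k ih.2⟩
/-! ### the main theorem -/

theorem stmt13 (n : ℕ) (hn : 9 ≤ n) (hodd : Odd n) :
    IsLeast {w : ℕ | (∃ x : Fin n → ZMod 2, tw x = w) ∧ 0 < w ∧ w ≠ n}
      ((3 * n - 3) / 2) ∧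
    (∀ x : Fin n → ZMod 2, tw x = (3 * n - 3) / 2 ↔
      x = b2 n ∨ x = b4 n ∨ x = b6 n) ∧
    IsLeast {w : ℕ | (∃ x : Fin n → ZMod 2, tw x = w) ∧ 0 < w ∧ w ≠ n ∧
        w ≠ (3 * n - 3) / 2} ((3 * n - 1) / 2) ∧
    (∀ x : Fin n → ZMod 2, tw x = (3 * n - 1) / 2 ↔
      x = b1 n ∨ x = b3 n ∨ x = b5 n) := by
  obtain ⟨t, ht⟩ := hodd
  obtain ⟨K, rfl⟩ : ∃ K, n = 2 * (K + 1) + 7 := ⟨t - 4, by omega⟩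
  obtain ⟨cls, v0, v1, ve0, veL, ve1, veL2, vb1, vb3, vb4, vb5, -⟩ := main_ind (K + 1)
  have e1 : (3 * (2 * (K + 1) + 7) - 3) / 2 = 3 * (K + 1) + 9 := by omega
  have e2 : (3 * (2 * (K + 1) + 7) - 1) / 2 = 3 * (K + 1) + 10 := by omega
  refine ⟨⟨⟨⟨b4 _, by rw [vb4, e1]⟩, by omega, by omega⟩, ?_⟩, ?_, ⟨⟨⟨b1 _, by rw [vb1, e2]⟩,
    by omega, by omega, by omega⟩, ?_⟩, ?_⟩
  · -- lower bound for the second-smallest weight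
    rintro w ⟨⟨x, hx⟩, hpos, hne⟩
    rw [e1]
    by_contra hlt
    push_neg at hlt
    have hle : tw x ≤ 3 * (K + 1) + 10 := by omega
    rcases cls x hle with hc | hc | hc | hc | hc | hc | hc | hc | hc | hc | ⟨hk, hc⟩
    · rw [hc, v0] at hx; omega
    · rw [hc, v1] at hx; omega
    · rw [hc, ve0] at hx; omega
    · rw [hc, veL] at hx; omega
    · rw [hc, ve1] at hx; omega
    · rw [hc, veL2] at hx; omega
    · rw [hc, vb1] at hx; omega
    · rw [hc, vb3] at hx; omega
    · rw [hc, vb4] at hx; omega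
    · rw [hc, vb5] at hx; omega
    · omega
  · -- characterization of the second-smallest weight
    intro x
    rw [e1]
    constructor
    · intro hx
      have hle : tw x ≤ 3 * (K + 1) + 10 := by omega
      rcases cls x hle with hc | hc | hc | hc | hc | hc | hc | hc | hc | hc | ⟨hk, hc⟩
      · rw [hc, v0] at hx; omega
      · rw [hc, v1] at hx; omega
      · rw [hc, ve0] at hx; omega
      · rw [hc, veL] at hx; omega
      · exact Or.inl hc
      · exact Or.inr (Or.inr hc)
      · rw [hc, vb1] at hx; omega
      · rw [hc, vb3] at hx; omega
      · exact Or.inr (Or.inl hc)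
      · rw [hc, vb5] at hx; omega
      · omega
    · rintro (hc | hc | hc)
      · rw [hc]; exact ve1
      · rw [hc]; exact vb4
      · rw [hc]; exact veL2
  · -- lower bound for the third-smallest weight
    rintro w ⟨⟨x, hx⟩, hpos, hne, hne2⟩
    rw [e1] at hne2
    rw [e2]
    by_contra hlt
    push_neg at hlt
    have hle : tw x ≤ 3 * (K + 1) + 10 := by omega
    rcases cls x hle with hc | hc | hc | hc | hc | hc | hc | hc | hc | hc | ⟨hk, hc⟩
    · rw [hc, v0] at hx; omega
    · rw [hc, v1] at hx; omega
    · rw [hc, ve0] at hx; omega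
    · rw [hc, veL] at hx; omega
    · rw [hc, ve1] at hx; omega
    · rw [hc, veL2] at hx; omega
    · rw [hc, vb1] at hx; omega
    · rw [hc, vb3] at hx; omega
    · rw [hc, vb4] at hx; omega
    · rw [hc, vb5] at hx; omega
    · omega
  · -- characterization of the third-smallest weight
    intro x
    rw [e2]
    constructor
    · intro hx
      have hle : tw x ≤ 3 * (K + 1) + 10 := by omega
      rcases cls x hle with hc | hc | hc | hc | hc | hc | hc | hc | hc | hc | ⟨hk, hc⟩
      · rw [hc, v0] at hx; omega
      · rw [hc, v1] at hx; omega
      · rw [hc, ve0] at hx; omega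
      · rw [hc, veL] at hx; omega
      · rw [hc, ve1] at hx; omega
      · rw [hc, veL2] at hx; omega
      · exact Or.inl hc
      · exact Or.inr (Or.inl hc)
      · rw [hc, vb4] at hx; omega
      · exact Or.inr (Or.inr hc)
      · omega
    · rintro (hc | hc | hc)
      · rw [hc]; exact vb1
      · rw [hc]; exact vb3
      · rw [hc]; exact vb5
end

section
/- Let n ≥ 4 be even. If n ≡ 0 (mod 4), then each of the six sequences c₁ = repeating pattern 0011, c₂ = (1,0,1,0,…,0), c₃ = (0,…,0,1,0,0), c₄ = repeating pattern 1100, c₅ = (0,0,1,0,…,0), c₆ = (0,…,0,1,0,1) generates a Steinhaus triangle of weight 2n-3. If n ≡ 2 (mod 4), then c₁, c₃, c₅ generate triangles of weight 2n-4 while c₂, c₄, c₆ generate triangles of weight 2n-2. -/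
/-- `c₁` : first n terms of the periodic sequence `00110011…`. -/
def c1 (n : ℕ) : Fin n → ZMod 2 := fun i => if i.1 % 4 = 2 ∨ i.1 % 4 = 3 then 1 else 0
/-- `c₂` : ones in positions 0 and 2. -/
def c2 (n : ℕ) : Fin n → ZMod 2 := fun i => if i.1 = 0 ∨ i.1 = 2 then 1 else 0
/-- `c₃` : single one in position n-3. -/
def c3 (n : ℕ) : Fin n → ZMod 2 := e n (n - 3)
/-- `c₄` : first n terms of the periodic sequence `11001100…`. -/
def c4 (n : ℕ) : Fin n → ZMod 2 := fun i => if i.1 % 4 = 0 ∨ i.1 % 4 = 1 then 1 else 0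
/-- `c₅` : single one in position 2. -/
def c5 (n : ℕ) : Fin n → ZMod 2 := e n 2
/-- `c₆` : ones in positions n-3 and n-1. -/
def c6 (n : ℕ) : Fin n → ZMod 2 := fun i => if i.1 = n - 3 ∨ i.1 = n - 1 then 1 else 0

lemma wt_congr {a b : ℕ} (h : a = b) (y : Fin a → ZMod 2) (z : Fin b → ZMod 2)
    (hyz : ∀ i : Fin a, y i = z ⟨i.1, h ▸ i.2⟩) : wt y = wt z := by
  subst h
  have : y = z := funext fun i => by rw [hyz i]
  rw [this]

lemma derIter_succ_apply {n : ℕ} (x : Fin n → ZMod 2) :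
    ∀ (j : ℕ) (i : Fin (n - (j+1))), derIter x (j+1) i = derIter (der x) j ⟨i.1, by omega⟩ := by
  intro j
  induction j with
  | zero =>
    intro i
    show der x i = der x ⟨i.1, _⟩
    congr 1
  | succ j ih =>
    intro i
    show der (derIter x (j+1)) i = der (derIter (der x) j) ⟨i.1, _⟩
    show derIter x (j+1) ⟨i.1, by omega⟩ + derIter x (j+1) ⟨i.1+1, by omega⟩ = _
    rw [ih ⟨i.1, by omega⟩, ih ⟨i.1+1, by omega⟩]
    rfl

lemma tw_der {n : ℕ} (hn : 1 ≤ n) (x : Fin n → ZMod 2) : tw x = wt x + tw (der x) := by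
  obtain ⟨m, rfl⟩ : ∃ m, n = m + 1 := ⟨n - 1, by omega⟩
  show ∑ j ∈ Finset.range (m+1), wt (derIter x j) = wt x + ∑ j ∈ Finset.range m, wt (derIter (der x) j)
  rw [Finset.sum_range_succ']
  have hrow : ∀ j, wt (derIter x (j+1)) = wt (derIter (der x) j) := by
    intro j
    exact wt_congr (by omega) _ _ (fun i => derIter_succ_apply x j i)
  simp only [hrow]
  rw [Nat.add_comm]
  rfl

lemma derIter_zero_apply {m : ℕ} : ∀ (j : ℕ) (i : Fin (m - j)), derIter (fun _ : Fin m => (0 : ZMod 2)) j i = 0 := by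
  intro j
  induction j with
  | zero => intro i; rfl
  | succ j ih =>
    intro i
    show derIter _ j _ + derIter _ j _ = 0
    rw [ih, ih]
    rfl

lemma tw_zero {m : ℕ} : tw (fun _ : Fin m => (0 : ZMod 2)) = 0 := by
  have : ∀ j, wt (derIter (fun _ : Fin m => (0 : ZMod 2)) j) = 0 := by
    intro j
    rw [wt]
    convert Finset.card_empty
    ext i
    simp [derIter_zero_apply j i]
  simp [tw, this]

lemma wt_eq_sum {m : ℕ} (y : Fin m → ZMod 2) (f : ℕ → ℕ)
    (hf : ∀ i : Fin m, (if y i = 1 then 1 else 0) = f i.1) :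
    wt y = ∑ i ∈ Finset.range m, f i := by
  rw [wt, Finset.card_filter, ← Fin.sum_univ_eq_sum_range]
  exact Finset.sum_congr rfl (fun i _ => hf i)

lemma indicator_eq (P : Prop) [Decidable P] :
    (if (if P then (1 : ZMod 2) else 0) = 1 then (1 : ℕ) else 0) = if P then 1 else 0 := by
  by_cases h : P <;> simp [h]

lemma sum_mod4_23 (m : ℕ) :
    (∑ i ∈ Finset.range m, if i % 4 = 2 ∨ i % 4 = 3 then 1 else 0) = (m+1)/4 + m/4 := by
  induction m with
  | zero => simp
  | succ m ih => rw [Finset.sum_range_succ, ih]; split_ifs <;> omega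

lemma sum_mod4_01 (m : ℕ) :
    (∑ i ∈ Finset.range m, if i % 4 = 0 ∨ i % 4 = 1 then 1 else 0) = (m+3)/4 + (m+2)/4 := by
  induction m with
  | zero => simp
  | succ m ih => rw [Finset.sum_range_succ, ih]; split_ifs <;> omega

lemma sum_mod2_1 (m : ℕ) :
    (∑ i ∈ Finset.range m, if i % 2 = 1 then 1 else 0) = m / 2 := by
  induction m with
  | zero => simp
  | succ m ih => rw [Finset.sum_range_succ, ih]; split_ifs <;> omega

lemma sum_one (m a : ℕ) :
    (∑ i ∈ Finset.range m, if i = a then 1 else 0) = (if a < m then 1 else 0) := by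
  induction m with
  | zero => simp
  | succ m ih => rw [Finset.sum_range_succ, ih]; split_ifs <;> omega

lemma sum_two (m a b : ℕ) (hab : a ≠ b) :
    (∑ i ∈ Finset.range m, if i = a ∨ i = b then 1 else 0) =
      (if a < m then 1 else 0) + (if b < m then 1 else 0) := by
  induction m with
  | zero => simp
  | succ m ih => rw [Finset.sum_range_succ, ih]; split_ifs <;> omega

lemma sum_three (m a b c : ℕ) (hab : a ≠ b) (hac : a ≠ c) (hbc : b ≠ c) :
    (∑ i ∈ Finset.range m, if i = a ∨ i = b ∨ i = c then 1 else 0) =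
      (if a < m then 1 else 0) + (if b < m then 1 else 0) + (if c < m then 1 else 0) := by
  induction m with
  | zero => simp
  | succ m ih => rw [Finset.sum_range_succ, ih]; split_ifs <;> omega

lemma wt_single (m k : ℕ) (hk : k < m) :
    wt (fun i : Fin m => if i.1 = k then 1 else 0) = 1 := by
  rw [wt_eq_sum _ (fun i => if i = k then 1 else 0) (fun i => indicator_eq _), sum_one]
  simp [hk]

lemma wt_two (m a b : ℕ) (hab : a ≠ b) (ha : a < m) (hb : b < m) :
    wt (fun i : Fin m => if i.1 = a ∨ i.1 = b then 1 else 0) = 2 := by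
  rw [wt_eq_sum _ (fun i => if i = a ∨ i = b then 1 else 0) (fun i => indicator_eq _),
    sum_two m a b hab]
  simp [ha, hb]

lemma wt_three (m a b c : ℕ) (hab : a ≠ b) (hac : a ≠ c) (hbc : b ≠ c)
    (ha : a < m) (hb : b < m) (hc : c < m) :
    wt (fun i : Fin m => if i.1 = a ∨ i.1 = b ∨ i.1 = c then 1 else 0) = 3 := by
  rw [wt_eq_sum _ (fun i => if i = a ∨ i = b ∨ i = c then 1 else 0) (fun i => indicator_eq _),
    sum_three m a b c hab hac hbc]
  simp [ha, hb, hc]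

lemma wt_ones (m : ℕ) : wt (fun _ : Fin m => (1 : ZMod 2)) = m := by
  rw [wt]
  simp

lemma wt_alt (m : ℕ) : wt (fun i : Fin m => if i.1 % 2 = 1 then 1 else 0) = m / 2 := by
  rw [wt_eq_sum _ (fun i => if i % 2 = 1 then 1 else 0) (fun i => indicator_eq _), sum_mod2_1]

lemma der_c1 (n : ℕ) : der (c1 n) = fun i : Fin (n-1) => if i.1 % 2 = 1 then 1 else 0 := by
  funext i
  simp only [der, c1]
  split_ifs <;> first | decide | omega | (simp only [false_or, or_false] at * ; omega)

lemma der2_c1 (n : ℕ) : der (der (c1 n)) = fun _ : Fin (n-1-1) => (1 : ZMod 2) := by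
  rw [der_c1]
  funext i
  simp only [der]
  split_ifs <;> first | decide | omega | (simp only [false_or, or_false] at * ; omega)

lemma der3_c1 (n : ℕ) : der (der (der (c1 n))) = fun _ : Fin (n-1-1-1) => (0 : ZMod 2) := by
  rw [der2_c1]
  funext i
  simp only [der]
  decide

lemma der_c4 (n : ℕ) : der (c4 n) = fun i : Fin (n-1) => if i.1 % 2 = 1 then 1 else 0 := by
  funext i
  simp only [der, c4]
  split_ifs <;> first | decide | omega | (simp only [false_or, or_false] at * ; omega)

lemma der_c2 (n : ℕ) (hn : 4 ≤ n) :
    der (c2 n) = fun i : Fin (n-1) => if i.1 = 0 ∨ i.1 = 1 ∨ i.1 = 2 then 1 else 0 := by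
  funext i
  have hi := i.2
  simp only [der, c2]
  split_ifs <;> first | decide | omega | (simp only [false_or, or_false] at * ; omega)

lemma der2_c2 (n : ℕ) (hn : 4 ≤ n) : der (der (c2 n)) = c5 (n - 2) := by
  funext i
  have hi := i.2
  simp only [der, c2, c5, e]
  split_ifs <;> first | decide | omega | (simp only [false_or, or_false] at * ; omega)

lemma der_c5 (n : ℕ) (hn : 4 ≤ n) :
    der (c5 n) = fun i : Fin (n-1) => if i.1 = 1 ∨ i.1 = 2 then 1 else 0 := by
  funext i
  have hi := i.2
  simp only [der, c5, e]
  split_ifs <;> first | decide | omega | (simp only [false_or, or_false] at * ; omega)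

lemma der2_c5 (n : ℕ) (hn : 4 ≤ n) : der (der (c5 n)) = c2 (n - 2) := by
  funext i
  have hi := i.2
  simp only [der, c2, c5, e]
  split_ifs <;> first | decide | omega | (simp only [false_or, or_false] at * ; omega)

lemma der_c3 (n : ℕ) (hn : 4 ≤ n) :
    der (c3 n) = fun i : Fin (n-1) => if i.1 = n-4 ∨ i.1 = n-3 then 1 else 0 := by
  funext i
  have hi := i.2
  simp only [der, c3, e]
  split_ifs <;> first | decide | omega | (simp only [false_or, or_false] at * ; omega)

lemma der2_c3 (n : ℕ) (hn : 6 ≤ n) : der (der (c3 n)) = c6 (n - 2) := by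
  funext i
  have hi := i.2
  simp only [der, c3, c6, e]
  split_ifs <;> first | decide | omega | (simp only [false_or, or_false] at * ; omega)

lemma der_c6 (n : ℕ) (hn : 6 ≤ n) :
    der (c6 n) = fun i : Fin (n-1) => if i.1 = n-4 ∨ i.1 = n-3 ∨ i.1 = n-2 then 1 else 0 := by
  funext i
  have hi := i.2
  simp only [der, c6]
  split_ifs <;> first | decide | omega | (simp only [false_or, or_false] at * ; omega)

lemma der2_c6 (n : ℕ) (hn : 6 ≤ n) : der (der (c6 n)) = c3 (n - 2) := by
  funext i
  have hi := i.2
  simp only [der, c3, c6, e]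
  split_ifs <;> first | decide | omega | (simp only [false_or, or_false] at * ; omega)

lemma wt_c1 (n : ℕ) : wt (c1 n) = (n+1)/4 + n/4 := by
  rw [show c1 n = fun i : Fin n => if i.1 % 4 = 2 ∨ i.1 % 4 = 3 then 1 else 0 from rfl,
    wt_eq_sum _ (fun i => if i % 4 = 2 ∨ i % 4 = 3 then 1 else 0) (fun i => indicator_eq _),
    sum_mod4_23]

lemma wt_c4 (n : ℕ) : wt (c4 n) = (n+3)/4 + (n+2)/4 := by
  rw [show c4 n = fun i : Fin n => if i.1 % 4 = 0 ∨ i.1 % 4 = 1 then 1 else 0 from rfl,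
    wt_eq_sum _ (fun i => if i % 4 = 0 ∨ i % 4 = 1 then 1 else 0) (fun i => indicator_eq _),
    sum_mod4_01]

lemma tw_c1 (n : ℕ) (hn : 4 ≤ n) :
    tw (c1 n) = (n+1)/4 + n/4 + ((n-1)/2 + (n-2)) := by
  rw [tw_der (by omega) (c1 n), tw_der (by omega) (der (c1 n)),
    tw_der (by omega) (der (der (c1 n))), der3_c1, tw_zero, der2_c1, wt_ones,
    der_c1, wt_alt, wt_c1]
  omega

lemma tw_c4 (n : ℕ) (hn : 4 ≤ n) :
    tw (c4 n) = (n+3)/4 + (n+2)/4 + ((n-1)/2 + (n-2)) := by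
  have h2 : der (der (c4 n)) = fun _ : Fin (n-1-1) => (1 : ZMod 2) := by
    rw [der_c4]
    funext i
    simp only [der]
    split_ifs <;> first | decide | omega
  have h3 : der (der (der (c4 n))) = fun _ : Fin (n-1-1-1) => (0 : ZMod 2) := by
    rw [h2]
    funext i
    simp only [der]
    decide
  rw [tw_der (by omega) (c4 n), tw_der (by omega) (der (c4 n)),
    tw_der (by omega) (der (der (c4 n))), h3, tw_zero, h2, wt_ones,
    der_c4, wt_alt, wt_c4]
  omega

lemma aux2356 : ∀ n, 4 ≤ n → n % 2 = 0 →
    (tw (c2 n) = (if n % 4 = 0 then 2*n-3 else 2*n-2)) ∧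
    (tw (c5 n) = (if n % 4 = 0 then 2*n-3 else 2*n-4)) ∧
    (tw (c3 n) = (if n % 4 = 0 then 2*n-3 else 2*n-4)) ∧
    (tw (c6 n) = (if n % 4 = 0 then 2*n-3 else 2*n-2)) := by
  intro n
  induction n using Nat.strong_induction_on with
  | _ n ih =>
    intro hn he
    by_cases h8 : n < 8
    · interval_cases n <;> first | omega | (refine ⟨?_, ?_, ?_, ?_⟩ <;> decide)
    · obtain ⟨ihc2, ihc5, ihc3, ihc6⟩ := ih (n-2) (by omega) (by omega) (by omega)
      have w2 : wt (c2 n) = 2 := wt_two n 0 2 (by omega) (by omega) (by omega)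
      have w5 : wt (c5 n) = 1 := wt_single n 2 (by omega)
      have w3 : wt (c3 n) = 1 := wt_single n (n-3) (by omega)
      have w6 : wt (c6 n) = 2 := wt_two n (n-3) (n-1) (by omega) (by omega) (by omega)
      have wd2 : wt (der (c2 n)) = 3 := by
        rw [der_c2 n (by omega)]
        exact wt_three (n-1) 0 1 2 (by omega) (by omega) (by omega) (by omega) (by omega) (by omega)
      have wd5 : wt (der (c5 n)) = 2 := by
        rw [der_c5 n (by omega)]
        exact wt_two (n-1) 1 2 (by omega) (by omega) (by omega)
      have wd3 : wt (der (c3 n)) = 2 := by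
        rw [der_c3 n (by omega)]
        exact wt_two (n-1) (n-4) (n-3) (by omega) (by omega) (by omega)
      have wd6 : wt (der (c6 n)) = 3 := by
        rw [der_c6 n (by omega)]
        exact wt_three (n-1) (n-4) (n-3) (n-2) (by omega) (by omega) (by omega) (by omega) (by omega) (by omega)
      have t2 : tw (c2 n) = 2 + (3 + tw (c5 (n-2))) := by
        rw [tw_der (by omega) (c2 n), tw_der (by omega) (der (c2 n)), w2, wd2,
          der2_c2 n (by omega)]
      have t5 : tw (c5 n) = 1 + (2 + tw (c2 (n-2))) := by
        rw [tw_der (by omega) (c5 n), tw_der (by omega) (der (c5 n)), w5, wd5,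
          der2_c5 n (by omega)]
      have t3 : tw (c3 n) = 1 + (2 + tw (c6 (n-2))) := by
        rw [tw_der (by omega) (c3 n), tw_der (by omega) (der (c3 n)), w3, wd3,
          der2_c3 n (by omega)]
      have t6 : tw (c6 n) = 2 + (3 + tw (c3 (n-2))) := by
        rw [tw_der (by omega) (c6 n), tw_der (by omega) (der (c6 n)), w6, wd6,
          der2_c6 n (by omega)]
      rw [t2, t5, t3, t6, ihc2, ihc5, ihc3, ihc6]
      refine ⟨?_, ?_, ?_, ?_⟩ <;> (split_ifs <;> omega)

theorem stmt14 (n : ℕ) (hn : 4 ≤ n) (heven : Even n) :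
    (n % 4 = 0 →
      tw (c1 n) = 2 * n - 3 ∧ tw (c2 n) = 2 * n - 3 ∧ tw (c3 n) = 2 * n - 3 ∧
      tw (c4 n) = 2 * n - 3 ∧ tw (c5 n) = 2 * n - 3 ∧ tw (c6 n) = 2 * n - 3) ∧
    (n % 4 = 2 →
      tw (c1 n) = 2 * n - 4 ∧ tw (c3 n) = 2 * n - 4 ∧ tw (c5 n) = 2 * n - 4 ∧
      tw (c2 n) = 2 * n - 2 ∧ tw (c4 n) = 2 * n - 2 ∧ tw (c6 n) = 2 * n - 2) := by
  have he2 : n % 2 = 0 := Nat.even_iff.mp heven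
  obtain ⟨h2, h5, h3, h6⟩ := aux2356 n hn he2
  have h1 := tw_c1 n hn
  have h4 := tw_c4 n hn
  constructor <;> intro hmod <;> split_ifs at h2 h5 h3 h6 <;> omega
end

section
/- For every x ∈ F₂ⁿ with n ≥ 4, the sum of the weights of the first three rows of the Steinhaus triangle of x satisfies |x| + |∂x| + |∂²x| ≤ 2n - 2. -/
theorem stmt15 (n : ℕ) (hn : 4 ≤ n) (x : Fin n → ZMod 2) :
    wt x + wt (der x) + wt (der (der x)) ≤ 2 * n - 2 := by
  classical
  obtain ⟨m, rfl⟩ : ∃ m, n = m + 4 := ⟨n - 4, by omega⟩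
  set X : ℕ → ZMod 2 := fun i => if h : i < m + 4 then x ⟨i, h⟩ else 0 with hXdef
  have hX : ∀ (i : ℕ) (h : i < m + 4), X i = x ⟨i, h⟩ := fun i h => dif_pos h
  set c : ZMod 2 → ℕ := fun a => if a = 1 then 1 else 0 with hcdef
  have wt_eq : ∀ (k : ℕ) (y : Fin k → ZMod 2),
      wt y = ∑ i ∈ Finset.range k, (if h : i < k then c (y ⟨i, h⟩) else 0) := by
    intro k y
    rw [wt, Finset.card_filter, ← Fin.sum_univ_eq_sum_range (fun i => if h : i < k then c (y ⟨i, h⟩) else 0)]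
    exact Finset.sum_congr rfl fun i _ => by simp [c, i.2]
  have h0 : wt x = ∑ i ∈ Finset.range (m + 4), c (X i) := by
    rw [wt_eq]
    refine Finset.sum_congr rfl fun i hi => ?_
    rw [Finset.mem_range] at hi
    rw [dif_pos hi, hX i hi]
  have h1 : wt (der x) = ∑ i ∈ Finset.range (m + 3), c (X i + X (i + 1)) := by
    rw [wt_eq]
    refine Finset.sum_congr rfl fun i hi => ?_
    rw [Finset.mem_range] at hi
    rw [dif_pos (show i < m + 4 - 1 by omega)]
    show c (der x ⟨i, _⟩) = _
    rw [der, hX i (by omega), hX (i + 1) (by omega)]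
  have h2 : wt (der (der x)) = ∑ i ∈ Finset.range (m + 2),
      c ((X i + X (i + 1)) + (X (i + 1) + X (i + 2))) := by
    rw [wt_eq]
    refine Finset.sum_congr rfl fun i hi => ?_
    rw [Finset.mem_range] at hi
    rw [dif_pos (show i < m + 4 - 1 - 1 by omega)]
    show c (der (der x) ⟨i, _⟩) = _
    rw [der, der, der, hX i (by omega), hX (i + 1) (by omega),
      hX (i + 2) (by omega)]
  set g : ℕ → ℕ := fun i =>
    c (X i) + c (X i + X (i + 1)) + c ((X i + X (i + 1)) + (X (i + 1) + X (i + 2))) with hgdef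
  set φ : ℕ → ℕ := fun i => if X i = 0 ∧ X (i + 1) = 0 then 0 else 1 with hφdef
  have hz : ∀ a : ZMod 2, a = 0 ∨ a = 1 := by decide
  have key : ∀ i, g i + φ (i + 1) ≤ 2 + φ i := by
    intro i
    rcases hz (X i) with ha | ha <;> rcases hz (X (i + 1)) with hb | hb <;>
      rcases hz (X (i + 2)) with hc | hc <;>
      simp [hgdef, hφdef, hcdef, ha, hb, hc] <;> decide
  have main : ∀ k, (∑ i ∈ Finset.range k, g i) + φ k ≤ 2 * k + φ 0 := by
    intro k
    induction k with
    | zero => simp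
    | succ k ih =>
      rw [Finset.sum_range_succ]
      have := key k
      omega
  have hsplit0 : wt x = (∑ i ∈ Finset.range (m + 2), c (X i)) + c (X (m + 2)) + c (X (m + 3)) := by
    rw [h0, Finset.sum_range_succ, Finset.sum_range_succ]
  have hsplit1 : wt (der x) = (∑ i ∈ Finset.range (m + 2), c (X i + X (i + 1)))
      + c (X (m + 2) + X (m + 3)) := by
    rw [h1, Finset.sum_range_succ]
  have hsum : (∑ i ∈ Finset.range (m + 2), c (X i)) +
      (∑ i ∈ Finset.range (m + 2), c (X i + X (i + 1))) +
      (∑ i ∈ Finset.range (m + 2), c ((X i + X (i + 1)) + (X (i + 1) + X (i + 2)))) =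
      ∑ i ∈ Finset.range (m + 2), g i := by
    rw [← Finset.sum_add_distrib, ← Finset.sum_add_distrib]
  have tail : c (X (m + 2)) + c (X (m + 3)) + c (X (m + 2) + X (m + 3)) ≤ 2 * φ (m + 2) := by
    rcases hz (X (m + 2)) with ha | ha <;> rcases hz (X (m + 3)) with hb | hb <;>
      simp [hφdef, hcdef, ha, hb] <;> decide
  have hφ0 : φ 0 ≤ 1 := by simp only [hφdef]; split <;> omega
  have hφm : φ (m + 2) ≤ 1 := by simp only [hφdef]; split <;> omega
  have hm := main (m + 2)
  rw [hsplit0, hsplit1, h2]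
  omega
end

section
/- For n ≥ 2, the maximum weight of a Steinhaus triangle of size n equals ⌈n(n+1)/3⌉. Moreover, it is attained exactly by {z₁, z₂, z₃} if n ≡ 0 or 2 (mod 3), and exactly by {z₁, z₃} if n ≡ 1 (mod 3), where z₁, z₂, z₃ are the first n terms of the periodic sequences 110110…, 011011…, 101101…. -/
/-- `z₁` : first n terms of the periodic sequence `110110110…`. -/
def z1 (n : ℕ) : Fin n → ZMod 2 := fun i => if i.1 % 3 = 2 then 0 else 1
/-- `z₂` : first n terms of the periodic sequence `011011011…`. -/
def z2 (n : ℕ) : Fin n → ZMod 2 := fun i => if i.1 % 3 = 0 then 0 else 1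
/-- `z₃` : first n terms of the periodic sequence `101101101…`. -/
def z3 (n : ℕ) : Fin n → ZMod 2 := fun i => if i.1 % 3 = 1 then 0 else 1


/-!
Strip the top three rows of the triangle of `y`. Read column by column, the column
`(yᵢ, yᵢ + yᵢ₊₁, yᵢ + yᵢ₊₂)` has weight at most `2 + φ(yᵢ, yᵢ₊₁) - φ(yᵢ₊₁, yᵢ₊₂)`, where
`φ(a, b) = 0` iff `a = b = 0`; telescoping, the three rows carry at most `2n - 2` ones. Since
`⌈(n+3)(n+4)/3⌉ = ⌈n(n+1)/3⌉ + 2n + 4`, induction in steps of three gives the bound.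

In the equality case every window `(yᵢ, yᵢ₊₁, yᵢ₊₂)` is tight and `∂³y` is a maximizer of size
`n - 3`. The three nonzero 3-periodic sequences with vanishing sums over a period are fixed by
`∂³`, and for `n ≥ 5` tight windows together with `∂³y` determine `y`; so the maximizers
propagate upwards from the sizes below `5`, which are checked by computation.
-/

open Finset

-- Words are handled as prefixes of infinite sequences, on which `∂` needs no index bookkeeping.
def trunc (n : ℕ) (y : ℕ → ZMod 2) : Fin n → ZMod 2 := fun i => y i

def seqDer (y : ℕ → ZMod 2) : ℕ → ZMod 2 := fun i => y i + y (i + 1)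

def seqWt (m : ℕ) (y : ℕ → ZMod 2) : ℕ := ∑ i ∈ range m, (y i).val

def triWt (n : ℕ) (y : ℕ → ZMod 2) : ℕ := ∑ j ∈ range n, seqWt (n - j) (seqDer^[j] y)

def topWt (n : ℕ) (y : ℕ → ZMod 2) : ℕ :=
  seqWt n y + seqWt (n - 1) (seqDer y) + seqWt (n - 2) (seqDer (seqDer y))

lemma trunc_surjective (n : ℕ) : Function.Surjective (trunc n) := fun x =>
  ⟨fun i => if h : i < n then x ⟨i, h⟩ else 0, funext fun i => dif_pos i.2⟩

lemma derIter_trunc (n : ℕ) (y : ℕ → ZMod 2) (j : ℕ) :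
    derIter (trunc n y) j = trunc (n - j) (seqDer^[j] y) := by
  induction j with
  | zero => rfl
  | succ j ih =>
    funext i
    rw [derIter, ih, Function.iterate_succ_apply']
    rfl

lemma val_eq_ite (a : ZMod 2) : a.val = if a = 1 then 1 else 0 := by
  revert a; decide

lemma wt_trunc (m : ℕ) (y : ℕ → ZMod 2) : wt (trunc m y) = seqWt m y := by
  rw [wt, card_filter, seqWt, ← Fin.sum_univ_eq_sum_range]
  exact sum_congr rfl fun i _ => (val_eq_ite _).symm

lemma tw_trunc (n : ℕ) (y : ℕ → ZMod 2) : tw (trunc n y) = triWt n y := by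
  simp only [tw, triWt, derIter_trunc, wt_trunc]

lemma triWt_add_three (m : ℕ) (y : ℕ → ZMod 2) :
    triWt (m + 3) y = topWt (m + 3) y + triWt m (seqDer^[3] y) := by
  rw [triWt, triWt, add_comm m 3, sum_range_add]
  congr 1
  · simp [sum_range_succ, topWt]
  · refine sum_congr rfl fun j _ => ?_
    rw [add_comm 3 j, Function.iterate_add_apply]
    congr 1
    omega

lemma tw_trunc_add_three (m : ℕ) (y : ℕ → ZMod 2) :
    tw (trunc (m + 3) y) = topWt (m + 3) y + tw (trunc m (seqDer^[3] y)) := by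
  rw [tw_trunc, tw_trunc, triWt_add_three]

lemma seqWt_succ (m : ℕ) (y : ℕ → ZMod 2) :
    seqWt (m + 1) y = (y 0).val + seqWt m (fun i => y (i + 1)) := by
  rw [seqWt, sum_range_succ', add_comm]
  rfl

lemma seqDer_three_apply (y : ℕ → ZMod 2) (i : ℕ) :
    seqDer^[3] y i = y i + y (i + 1) + y (i + 2) + y (i + 3) := by
  simp only [Function.iterate_succ, Function.iterate_zero, Function.comp_apply, seqDer, id]
  ring_nf
  reduce_mod_char

def pairWt (a b : ZMod 2) : ℕ := if a = 0 ∧ b = 0 then 0 else 1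

def colWt (a b c : ZMod 2) : ℕ := a.val + (a + b).val + (a + b + (b + c)).val

-- The tight windows are all but `000`, `010` and `111`.
def IsTight (a b c : ZMod 2) : Prop := colWt a b c + pairWt b c = 2 + pairWt a b

instance (a b c : ZMod 2) : Decidable (IsTight a b c) := inferInstanceAs (Decidable (_ = _))

def TightOn (m : ℕ) (y : ℕ → ZMod 2) : Prop :=
  (∀ i < m, IsTight (y i) (y (i + 1)) (y (i + 2))) ∧ pairWt (y m) (y (m + 1)) = 1

lemma pairWt_le_one (a b : ZMod 2) : pairWt a b ≤ 1 := by
  unfold pairWt; split <;> omega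

lemma colWt_add_pairWt_le (a b c : ZMod 2) : colWt a b c + pairWt b c ≤ 2 + pairWt a b := by
  revert a b c; decide

lemma val_add_val_add_val (a b : ZMod 2) : a.val + b.val + (a + b).val = 2 * pairWt a b := by
  revert a b; decide

lemma topWt_add_three (m : ℕ) (y : ℕ → ZMod 2) :
    topWt (m + 3) y = colWt (y 0) (y 1) (y 2) + topWt (m + 2) (fun i => y (i + 1)) := by
  show seqWt (m + 2 + 1) y + seqWt (m + 1 + 1) (seqDer y) + seqWt (m + 1) (seqDer (seqDer y)) =
    _ + (seqWt (m + 2) _ + seqWt (m + 1) _ + seqWt m _)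
  have hshift (z : ℕ → ZMod 2) : seqDer (fun i => z (i + 1)) = fun i => seqDer z (i + 1) := rfl
  have hcol : colWt (y 0) (y 1) (y 2) = (y 0).val + (seqDer y 0).val + (seqDer (seqDer y) 0).val :=
    rfl
  rw [seqWt_succ (m + 2) y, seqWt_succ (m + 1) (seqDer y), seqWt_succ m (seqDer (seqDer y)),
    hshift, hshift, hcol]
  omega

lemma tightOn_succ (m : ℕ) (y : ℕ → ZMod 2) :
    TightOn (m + 1) y ↔ IsTight (y 0) (y 1) (y 2) ∧ TightOn m (fun i => y (i + 1)) := by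
  rw [TightOn, Nat.forall_lt_succ_left, and_assoc]
  rfl

theorem topWt_le_and_eq_iff (m : ℕ) (y : ℕ → ZMod 2) :
    topWt (m + 2) y ≤ 2 * m + 1 + pairWt (y 0) (y 1) ∧
      (topWt (m + 2) y = 2 * m + 1 + pairWt (y 0) (y 1) ↔ TightOn m y) := by
  induction m generalizing y with
  | zero =>
    have h : topWt 2 y = 2 * pairWt (y 0) (y 1) := by
      rw [← val_add_val_add_val]
      simp [topWt, seqWt, sum_range_succ, seqDer]
    have := pairWt_le_one (y 0) (y 1)
    simp only [TightOn, Nat.not_lt_zero, false_imp_iff, implies_true, true_and, zero_add, h]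
    omega
  | succ k ih =>
    have hcol := colWt_add_pairWt_le (y 0) (y 1) (y 2)
    obtain ⟨hle, heq⟩ := ih (fun i => y (i + 1))
    simp only [zero_add, Nat.reduceAdd] at hle heq
    rw [show k + 1 + 2 = k + 3 from rfl, topWt_add_three, tightOn_succ, IsTight, ← heq]
    omega

-- `z1 n`, `z2 n`, `z3 n` are `trunc n (zseq 2)`, `trunc n (zseq 0)`, `trunc n (zseq 1)`.
def zseq (r : Fin 3) (i : ℕ) : ZMod 2 := if i % 3 = r then 0 else 1

lemma zseq_add_three (r : Fin 3) (i : ℕ) : zseq r (i + 3) = zseq r i := by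
  simp only [zseq, Nat.add_mod_right]

lemma zseq_add_zseq_add_zseq (r : Fin 3) (i : ℕ) :
    zseq r i + zseq r (i + 1) + zseq r (i + 2) = 0 := by
  have := r.isLt
  unfold zseq
  split_ifs <;> first | decide | omega

lemma isTight_zseq (r : Fin 3) (i : ℕ) :
    IsTight (zseq r i) (zseq r (i + 1)) (zseq r (i + 2)) := by
  have := r.isLt
  unfold zseq
  split_ifs <;> first | decide | omega

lemma pairWt_zseq (r : Fin 3) (i : ℕ) : pairWt (zseq r i) (zseq r (i + 1)) = 1 := by
  have := r.isLt
  unfold zseq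
  split_ifs <;> first | decide | omega

lemma tightOn_zseq (r : Fin 3) (m : ℕ) : TightOn m (zseq r) :=
  ⟨fun i _ => isTight_zseq r i, pairWt_zseq r m⟩

lemma seqDer_three_zseq (r : Fin 3) : seqDer^[3] (zseq r) = zseq r := by
  funext i
  rw [seqDer_three_apply, zseq_add_zseq_add_zseq, zseq_add_three, zero_add]

set_option synthInstance.maxSize 1000 in
lemma init_eq_zseq_of_isTight : ∀ (r : Fin 3) (a b c d e : ZMod 2), IsTight a b c →
    IsTight b c d → IsTight c d e → a + b + c + d = zseq r 0 → b + c + d + e = zseq r 1 →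
    a = zseq r 0 ∧ b = zseq r 1 ∧ c = zseq r 2 := by
  decide

lemma eq_zseq_of_isTight (r : Fin 3) (k : ℕ) (y : ℕ → ZMod 2)
    (htight : ∀ i < k + 3, IsTight (y i) (y (i + 1)) (y (i + 2)))
    (hder : ∀ i < k + 2, seqDer^[3] y i = zseq r i) :
    ∀ i < k + 5, y i = zseq r i := by
  simp only [seqDer_three_apply] at hder
  obtain ⟨h0, h1, h2⟩ := init_eq_zseq_of_isTight r _ _ _ _ _ (htight 0 (by omega))
    (htight 1 (by omega)) (htight 2 (by omega)) (hder 0 (by omega)) (hder 1 (by omega))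
  intro i hi
  induction i using Nat.strong_induction_on with
  | _ i ih =>
    match i, ih with
    | 0, _ => exact h0
    | 1, _ => exact h1
    | 2, _ => exact h2
    | j + 3, ih =>
      have h := hder j (by omega)
      rw [ih j (by omega) (by omega), ih (j + 1) (by omega) (by omega),
        ih (j + 2) (by omega) (by omega), zseq_add_zseq_add_zseq, zero_add] at h
      rw [h, zseq_add_three]

def maxTw (n : ℕ) : ℕ := (n * (n + 1) + 2) / 3

lemma maxTw_add_three (m : ℕ) : maxTw (m + 3) = 2 * m + 4 + maxTw m := by
  rw [maxTw, maxTw, show (m + 3) * (m + 3 + 1) + 2 = (m * (m + 1) + 2) + 3 * (2 * m + 4) by ring,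
    Nat.add_mul_div_left _ _ (by norm_num)]
  omega

def MaxWeightSpec (n : ℕ) : Prop :=
  (∀ x : Fin n → ZMod 2, tw x ≤ maxTw n) ∧
    ∀ x : Fin n → ZMod 2,
      tw x = maxTw n ↔ ∃ r : Fin 3, (r ≠ 0 ∨ n % 3 ≠ 1) ∧ x = trunc n (zseq r)

lemma maxWeightSpec_of_lt_five {n : ℕ} (hn : n < 5) : MaxWeightSpec n := by
  unfold MaxWeightSpec
  interval_cases n <;> decide

lemma maxWeightSpec_add_three {m : ℕ} (hm : 2 ≤ m) (ih : MaxWeightSpec m) :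
    MaxWeightSpec (m + 3) := by
  have key (y : ℕ → ZMod 2) : tw (trunc (m + 3) y) ≤ maxTw (m + 3) ∧
      (tw (trunc (m + 3) y) = maxTw (m + 3) ↔ pairWt (y 0) (y 1) = 1 ∧ TightOn (m + 1) y ∧
        tw (trunc m (seqDer^[3] y)) = maxTw m) := by
    obtain ⟨htop, htop_eq⟩ := topWt_le_and_eq_iff (m + 1) y
    rw [show m + 1 + 2 = m + 3 from rfl] at htop htop_eq
    have := pairWt_le_one (y 0) (y 1)
    have := ih.1 (trunc m (seqDer^[3] y))
    rw [tw_trunc_add_three, maxTw_add_three, ← htop_eq]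
    omega
  have hmod : (m + 3) % 3 = m % 3 := Nat.add_mod_right m 3
  refine ⟨fun x => ?_, fun x => ⟨fun hx => ?_, ?_⟩⟩
  · obtain ⟨y, rfl⟩ := trunc_surjective _ x
    exact (key y).1
  · obtain ⟨y, rfl⟩ := trunc_surjective _ x
    obtain ⟨-, htight, hrest⟩ := (key y).2.1 hx
    obtain ⟨r, hr, hder⟩ := (ih.2 _).1 hrest
    refine ⟨r, hmod ▸ hr, funext fun i => ?_⟩
    exact eq_zseq_of_isTight r (m - 2) y (fun i hi => htight.1 i (by omega))
      (fun i hi => congrFun hder ⟨i, by omega⟩) i (by omega)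
  · rintro ⟨r, hr, rfl⟩
    refine (key (zseq r)).2.2 ⟨pairWt_zseq r 0, tightOn_zseq r (m + 1), ?_⟩
    rw [seqDer_three_zseq]
    exact (ih.2 _).2 ⟨r, hmod ▸ hr, rfl⟩

theorem maxWeightSpec (n : ℕ) : MaxWeightSpec n := by
  induction n using Nat.strong_induction_on with
  | _ n ih =>
    rcases lt_or_ge n 5 with hn | hn
    · exact maxWeightSpec_of_lt_five hn
    · obtain ⟨m, rfl⟩ : ∃ m, n = m + 3 := ⟨n - 3, by omega⟩
      exact maxWeightSpec_add_three (by omega) (ih m (by omega))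

lemma exists_zseq_iff (n : ℕ) (x : Fin n → ZMod 2) :
    (∃ r : Fin 3, (r ≠ 0 ∨ n % 3 ≠ 1) ∧ x = trunc n (zseq r)) ↔
      x = z1 n ∨ x = z3 n ∨ (n % 3 ≠ 1 ∧ x = z2 n) := by
  have h1 : z1 n = trunc n (zseq 2) := rfl
  have h2 : z2 n = trunc n (zseq 0) := rfl
  have h3 : z3 n = trunc n (zseq 1) := rfl
  simp only [Fin.exists_fin_succ, Fin.succ_zero_eq_one, Fin.succ_one_eq_two, h1, h2, h3,
    IsEmpty.exists_iff, or_false, ne_eq, Fin.succ_ne_zero,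
    not_true_eq_false, not_false_eq_true, false_or, true_or, true_and]
  tauto

theorem stmt18_general (n : ℕ) :
    IsGreatest {w : ℕ | ∃ x : Fin n → ZMod 2, tw x = w}
      ((n * (n + 1) + 2) / 3) ∧
    (n % 3 = 0 ∨ n % 3 = 2 →
      ∀ x : Fin n → ZMod 2, tw x = (n * (n + 1) + 2) / 3 ↔
        x = z1 n ∨ x = z2 n ∨ x = z3 n) ∧
    (n % 3 = 1 →
      ∀ x : Fin n → ZMod 2, tw x = (n * (n + 1) + 2) / 3 ↔
        x = z1 n ∨ x = z3 n) := by
  obtain ⟨hle, heq⟩ := maxWeightSpec n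
  have hmax (x : Fin n → ZMod 2) :
      tw x = (n * (n + 1) + 2) / 3 ↔ x = z1 n ∨ x = z3 n ∨ (n % 3 ≠ 1 ∧ x = z2 n) :=
    (heq x).trans (exists_zseq_iff n x)
  refine ⟨⟨⟨z1 n, (hmax _).2 (Or.inl rfl)⟩, ?_⟩, fun hn x => ?_, fun hn x => ?_⟩
  · rintro _ ⟨x, rfl⟩
    exact hle x
  · rw [hmax]
    have : n % 3 ≠ 1 := by omega
    tauto
  · rw [hmax]
    tauto

theorem stmt18 (n : ℕ) (hn : 2 ≤ n) :
    IsGreatest {w : ℕ | ∃ x : Fin n → ZMod 2, tw x = w}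
      ((n * (n + 1) + 2) / 3) ∧
    (n % 3 = 0 ∨ n % 3 = 2 →
      ∀ x : Fin n → ZMod 2, tw x = (n * (n + 1) + 2) / 3 ↔
        x = z1 n ∨ x = z2 n ∨ x = z3 n) ∧
    (n % 3 = 1 →
      ∀ x : Fin n → ZMod 2, tw x = (n * (n + 1) + 2) / 3 ↔
        x = z1 n ∨ x = z3 n) :=
  stmt18_general n
end

section
/- Let n ≥ 7 with n ≡ 1 (mod 3). Then the second largest weight of a Steinhaus triangle of size n is ⌈n(n+1)/3⌉ - 1 = (n² + n - 2)/3, and it is attained exactly by the single sequence z₂, the first n terms of the periodic sequence 011011011…. -/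
namespace StAux

def c (a : ZMod 2) : ℕ := if a = 1 then 1 else 0
def D (x : ℕ → ZMod 2) : ℕ → ZMod 2 := fun i => x i + x (i + 1)
def W (m : ℕ) (x : ℕ → ZMod 2) : ℕ := ∑ i ∈ Finset.range m, c (x i)
def T (m : ℕ) (x : ℕ → ZMod 2) : ℕ := ∑ j ∈ Finset.range m, W (m - j) (D^[j] x)
def S3 (m : ℕ) (x : ℕ → ZMod 2) : ℕ := W m x + W (m - 1) (D x) + W (m - 2) (D (D x))
def f3 (a b c' : ZMod 2) : ℕ := c a + c (a + b) + c (a + c')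
def phi (a b : ZMod 2) : ℕ := if a = 0 ∧ b = 0 then 1 else 0
def sl (a b c' : ZMod 2) : ℕ := (2 + phi b c') - (phi a b + f3 a b c')
def gsl (a b : ZMod 2) : ℕ := 2 - (phi a b + (c a + c b + c (a + b)))
def slk (m : ℕ) (x : ℕ → ZMod 2) : ℕ :=
  (∑ i ∈ Finset.range (m - 2), sl (x i) (x (i + 1)) (x (i + 2))) + gsl (x (m - 2)) (x (m - 1))
def ZZ (r : ℕ) (i : ℕ) : ZMod 2 := if i % 3 = r then 0 else 1
def padn {n : ℕ} (v : Fin n → ZMod 2) : ℕ → ZMod 2 :=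
  fun i => if h : i < n then v ⟨i, h⟩ else 0

lemma Wsucc (m : ℕ) (x : ℕ → ZMod 2) :
    W (m + 1) x = c (x 0) + W m (fun i => x (i + 1)) := by
  unfold W
  rw [Finset.sum_range_succ']
  exact Nat.add_comm _ _

lemma key : ∀ m, 2 ≤ m → ∀ x, S3 m x + phi (x 0) (x 1) + slk m x = 2 * (m - 1) := by
  intro m
  induction m using Nat.strong_induction_on with
  | _ m ih =>
    intro hm x
    match m, hm with
    | 2, _ =>
      have H : ∀ a b : ZMod 2,
          (c a + (c b + 0)) + (c (a + b) + 0) + 0 + phi a b + (0 + gsl a b) = 2 * (2 - 1) := by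
        decide
      have h2 := H (x 0) (x 1)
      simpa [S3, W, slk, D, Finset.sum_range_succ] using h2
    | (k + 3), _ =>
      have ih2 := ih (k + 2) (by omega) (by omega) (fun i => x (i + 1))
      have hS : S3 (k + 3) x = f3 (x 0) (x 1) (x 2) + S3 (k + 2) (fun i => x (i + 1)) := by
        have e1 : W (k + 3) x = c (x 0) + W (k + 2) (fun i => x (i + 1)) := Wsucc _ _
        have e2 : W (k + 2) (D x) = c (x 0 + x 1) + W (k + 1) (D (fun i => x (i + 1))) :=
          Wsucc _ _
        have e3 : W (k + 1) (D (D x)) =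
            c (x 0 + x 1 + (x 1 + x 2)) + W k (D (D (fun i => x (i + 1)))) := Wsucc _ _
        have hz : x 0 + x 1 + (x 1 + x 2) = x 0 + x 2 := by
          have : ∀ a b c' : ZMod 2, a + b + (b + c') = a + c' := by decide
          exact this _ _ _
        rw [hz] at e3
        show W (k + 3) x + W (k + 2) (D x) + W (k + 1) (D (D x)) = _
        rw [e1, e2, e3]
        show _ = c (x 0) + c (x 0 + x 1) + c (x 0 + x 2) +
          (W (k + 2) (fun i => x (i + 1)) + W (k + 1) (D (fun i => x (i + 1)))
            + W k (D (D (fun i => x (i + 1)))))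
        ring
      have hslk : slk (k + 3) x = sl (x 0) (x 1) (x 2) + slk (k + 2) (fun i => x (i + 1)) := by
        show (∑ i ∈ Finset.range (k + 1), sl (x i) (x (i + 1)) (x (i + 2)))
            + gsl (x (k + 1)) (x (k + 2)) = _
        rw [Finset.sum_range_succ']
        show (∑ i ∈ Finset.range k, sl (x (i + 1)) (x (i + 1 + 1)) (x (i + 1 + 2)))
            + sl (x 0) (x 1) (x 2) + gsl (x (k + 1)) (x (k + 2))
          = sl (x 0) (x 1) (x 2) +
            ((∑ i ∈ Finset.range k, sl (x (i + 1)) (x (i + 1 + 1)) (x (i + 1 + 2)))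
              + gsl (x (k + 1)) (x (k + 2)))
        ring
      have hid : f3 (x 0) (x 1) (x 2) + sl (x 0) (x 1) (x 2) + phi (x 0) (x 1)
          = 2 + phi (x 1) (x 2) := by
        have : ∀ a b c' : ZMod 2, f3 a b c' + sl a b c' + phi a b = 2 + phi b c' := by decide
        exact this _ _ _
      rw [hS, hslk]
      have hph : phi ((fun i => x (i+1)) 0) ((fun i => x (i+1)) 1) = phi (x 1) (x 2) := rfl
      rw [hph] at ih2
      omega

lemma Dit_congr (x y : ℕ → ZMod 2) (m : ℕ) (h : ∀ i < m, x i = y i) :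
    ∀ j i, i + j < m → D^[j] x i = D^[j] y i := by
  intro j
  induction j with
  | zero => intro i hi; simpa using h i (by omega)
  | succ j ih =>
    intro i hi
    rw [Function.iterate_succ_apply', Function.iterate_succ_apply']
    show D^[j] x i + D^[j] x (i + 1) = D^[j] y i + D^[j] y (i + 1)
    rw [ih i (by omega), ih (i + 1) (by omega)]

lemma W_congr (m : ℕ) (x y : ℕ → ZMod 2) (h : ∀ i < m, x i = y i) : W m x = W m y := by
  unfold W
  exact Finset.sum_congr rfl fun i hi => by rw [h i (Finset.mem_range.mp hi)]

lemma T_congr (m : ℕ) (x y : ℕ → ZMod 2) (h : ∀ i < m, x i = y i) : T m x = T m y := by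
  unfold T
  refine Finset.sum_congr rfl fun j hj => ?_
  exact W_congr _ _ _ fun i hi => Dit_congr x y m h j i (by
    have := Finset.mem_range.mp hj; omega)

lemma S3_congr (m : ℕ) (x y : ℕ → ZMod 2) (h : ∀ i < m, x i = y i) : S3 m x = S3 m y := by
  unfold S3
  rw [W_congr m x y h, W_congr (m-1) (D x) (D y)
      (fun i hi => Dit_congr x y m h 1 i (by omega)),
    W_congr (m-2) (D (D x)) (D (D y)) (fun i hi => Dit_congr x y m h 2 i (by omega))]

lemma Tsplit (k : ℕ) (x : ℕ → ZMod 2) : T (k + 3) x = S3 (k + 3) x + T k (D^[3] x) := by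
  unfold T
  rw [Finset.sum_range_succ', Finset.sum_range_succ', Finset.sum_range_succ']
  have h1 : ∀ j ∈ Finset.range k,
      W (k + 3 - (j + 1 + 1 + 1)) (D^[j + 1 + 1 + 1] x) = W (k - j) (D^[j] (D^[3] x)) := by
    intro j hj
    have e1 : j + 1 + 1 + 1 = j + 3 := by omega
    rw [e1, show k + 3 - (j + 3) = k - j from by omega, Function.iterate_add_apply]
  rw [Finset.sum_congr rfl h1]
  have e0 : W (k + 3 - 0) (D^[0] x) = W (k + 3) x := by simp
  have e1 : W (k + 3 - (0 + 1)) (D^[0 + 1] x) = W (k + 2) (D x) := by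
    norm_num
  have e2 : W (k + 3 - (0 + 1 + 1)) (D^[0 + 1 + 1] x) = W (k + 1) (D (D x)) := by
    norm_num [Function.iterate_succ_apply', Function.iterate_one]
    rfl
  rw [e0, e1, e2]
  show _ = W (k + 3) x + W (k + 2) (D x) + W (k + 1) (D (D x)) + _
  ring

lemma D3_eq (x : ℕ → ZMod 2) (i : ℕ) :
    D^[3] x i = x i + x (i + 1) + x (i + 2) + x (i + 3) := by
  show ((x i + x (i+1)) + (x (i+1) + x (i+2))) + ((x (i+1) + x (i+2)) + (x (i+2) + x (i+3))) = _
  have : ∀ a b c' d : ZMod 2, ((a+b)+(b+c'))+((b+c')+(c'+d)) = a+b+c'+d := by decide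
  exact this _ _ _ _

lemma detm (Z x y : ℕ → ZMod 2) (m : ℕ)
    (hx : ∀ i, i + 3 < m → x (i + 3) = x i + x (i + 1) + x (i + 2) + Z i)
    (hy : ∀ i, i + 3 < m → y (i + 3) = y i + y (i + 1) + y (i + 2) + Z i)
    (h0 : x 0 = y 0) (h1 : x 1 = y 1) (h2 : x 2 = y 2) :
    ∀ i, i < m → x i = y i := by
  intro i
  induction i using Nat.strong_induction_on with
  | _ i ih =>
    intro him
    match i, him with
    | 0, _ => exact h0
    | 1, _ => exact h1
    | 2, _ => exact h2
    | (k + 3), him =>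
      rw [hx k him, hy k him, ih k (by omega) (by omega), ih (k + 1) (by omega) (by omega),
        ih (k + 2) (by omega) (by omega)]

def lifT (Z : ℕ → ZMod 2) (a b c : ZMod 2) : ℕ → ZMod 2 × ZMod 2 × ZMod 2
  | 0 => (a, b, c)
  | n + 1 => ((lifT Z a b c n).2.1, (lifT Z a b c n).2.2,
      (lifT Z a b c n).1 + (lifT Z a b c n).2.1 + (lifT Z a b c n).2.2 + Z n)

def liftF (Z : ℕ → ZMod 2) (a b c : ZMod 2) (i : ℕ) : ZMod 2 := (lifT Z a b c i).1

lemma liftF_rec (Z : ℕ → ZMod 2) (a b c : ZMod 2) (i : ℕ) :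
    liftF Z a b c (i + 3) =
      liftF Z a b c i + liftF Z a b c (i + 1) + liftF Z a b c (i + 2) + Z i := rfl

lemma ZZ_rec (r : ℕ) (hr : r < 3) (i : ℕ) :
    ZZ r (i + 3) = ZZ r i + ZZ r (i + 1) + ZZ r (i + 2) + ZZ r i := by
  have h : i % 3 = 0 ∨ i % 3 = 1 ∨ i % 3 = 2 := by omega
  have hr' : r = 0 ∨ r = 1 ∨ r = 2 := by omega
  unfold ZZ
  rw [show (i + 3) % 3 = i % 3 from by omega, show (i + 1) % 3 = (i % 3 + 1) % 3 from by omega,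
    show (i + 2) % 3 = (i % 3 + 2) % 3 from by omega]
  rcases h with h | h | h <;> rw [h] <;> rcases hr' with h' | h' | h' <;> rw [h'] <;> decide

lemma ZZ_D3 (r : ℕ) (hr : r < 3) (x : ℕ → ZMod 2) (i : ℕ)
    (h0 : x i = ZZ r i) (h1 : x (i+1) = ZZ r (i+1)) (h2 : x (i+2) = ZZ r (i+2))
    (h3 : x (i+3) = ZZ r (i+3)) :
    D^[3] x i = ZZ r i := by
  rw [D3_eq, h0, h1, h2, h3, ZZ_rec r hr i]
  have : ∀ a b c' : ZMod 2, a + b + c' + (a + b + c' + a) = a := by decide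
  exact this _ _ _

lemma cert2 : ∀ a b c' : ZMod 2, ¬(a = 1 ∧ b = 1 ∧ c' = 0) →
    2 ≤ phi a b + ∑ i ∈ Finset.range 6,
      sl (liftF (ZZ 2) a b c' i) (liftF (ZZ 2) a b c' (i+1)) (liftF (ZZ 2) a b c' (i+2)) := by
  decide

lemma cert0 : ∀ a b c' : ZMod 2, ¬(a = 0 ∧ b = 1 ∧ c' = 1) →
    2 ≤ phi a b + ∑ i ∈ Finset.range 6,
      sl (liftF (ZZ 0) a b c' i) (liftF (ZZ 0) a b c' (i+1)) (liftF (ZZ 0) a b c' (i+2)) := by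
  decide

lemma cert1 : ∀ a b c' : ZMod 2, ¬(a = 1 ∧ b = 0 ∧ c' = 1) →
    2 ≤ phi a b + ∑ i ∈ Finset.range 6,
      sl (liftF (ZZ 1) a b c' i) (liftF (ZZ 1) a b c' (i+1)) (liftF (ZZ 1) a b c' (i+2)) := by
  decide

lemma sl_ZZ (r : ℕ) (hr : r < 3) (i : ℕ) :
    sl (ZZ r i) (ZZ r (i+1)) (ZZ r (i+2)) = 0 := by
  have h : i % 3 = 0 ∨ i % 3 = 1 ∨ i % 3 = 2 := by omega
  have hr' : r = 0 ∨ r = 1 ∨ r = 2 := by omega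
  unfold ZZ
  rw [show (i + 1) % 3 = (i % 3 + 1) % 3 from by omega,
    show (i + 2) % 3 = (i % 3 + 2) % 3 from by omega]
  rcases h with h | h | h <;> rw [h] <;> rcases hr' with h' | h' | h' <;> rw [h'] <;> decide

lemma gsl_ZZ (r : ℕ) (hr : r < 3) (a b : ℕ) (ha : a % 3 = 2) (hb : b % 3 = 0) :
    gsl (ZZ r a) (ZZ r b) = 0 := by
  have hr' : r = 0 ∨ r = 1 ∨ r = 2 := by omega
  unfold ZZ
  rw [ha, hb]
  rcases hr' with h' | h' | h' <;> rw [h'] <;> decide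

lemma phi_ZZ (r : ℕ) (hr : r < 3) : phi (ZZ r 0) (ZZ r 1) = 0 := by
  have hr' : r = 0 ∨ r = 1 ∨ r = 2 := by omega
  rcases hr' with h' | h' | h' <;> rw [h'] <;> decide

/-- core of the induction step: a sequence whose third derivative is `ZZ r` either is `ZZ r`
or has `S3` at most `2(m-1) - 2`. -/
lemma step_core (M : ℕ) (hM : 10 ≤ M) (x : ℕ → ZMod 2) (r : ℕ) (hr : r < 3)
    (hy : ∀ i < M - 3, D^[3] x i = ZZ r i) :
    (∀ i < M, x i = ZZ r i) ∨ S3 M x + 2 ≤ 2 * (M - 1) := by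
  have hrec : ∀ i, i + 3 < M → x (i + 3) = x i + x (i + 1) + x (i + 2) + ZZ r i := by
    intro i hi
    have h := hy i (by omega)
    rw [D3_eq] at h
    have hzz : ∀ a b c' d e : ZMod 2, a + b + c' + d = e → d = a + b + c' + e := by decide
    exact hzz _ _ _ _ _ h
  by_cases hc : x 0 = ZZ r 0 ∧ x 1 = ZZ r 1 ∧ x 2 = ZZ r 2
  · left
    exact detm (ZZ r) x (ZZ r) M hrec (fun i _ => ZZ_rec r hr i) hc.1 hc.2.1 hc.2.2
  · right
    have hagree : ∀ i < M, x i = liftF (ZZ r) (x 0) (x 1) (x 2) i :=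
      detm (ZZ r) x _ M hrec (fun i _ => liftF_rec _ _ _ _ _) rfl rfl rfl
    have hS3 : S3 M x = S3 M (liftF (ZZ r) (x 0) (x 1) (x 2)) := S3_congr _ _ _ hagree
    have hkey := key M (by omega) (liftF (ZZ r) (x 0) (x 1) (x 2))
    have hcert : 2 ≤ phi (x 0) (x 1) + ∑ i ∈ Finset.range 6,
        sl (liftF (ZZ r) (x 0) (x 1) (x 2) i) (liftF (ZZ r) (x 0) (x 1) (x 2) (i+1))
          (liftF (ZZ r) (x 0) (x 1) (x 2) (i+2)) := by
      rcases (by omega : r = 0 ∨ r = 1 ∨ r = 2) with h' | h' | h' <;> subst h'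
      · exact cert0 _ _ _ (by simpa [ZZ] using hc)
      · exact cert1 _ _ _ (by simpa [ZZ] using hc)
      · exact cert2 _ _ _ (by simpa [ZZ] using hc)
    have hslk_ge : (∑ i ∈ Finset.range 6,
        sl (liftF (ZZ r) (x 0) (x 1) (x 2) i) (liftF (ZZ r) (x 0) (x 1) (x 2) (i+1))
          (liftF (ZZ r) (x 0) (x 1) (x 2) (i+2))) ≤ slk M (liftF (ZZ r) (x 0) (x 1) (x 2)) := by
      unfold slk
      exact le_trans (Finset.sum_le_sum_of_subset (Finset.range_subset_range.mpr (by omega)))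
        (Nat.le_add_right _ _)
    have hphi : phi (liftF (ZZ r) (x 0) (x 1) (x 2) 0) (liftF (ZZ r) (x 0) (x 1) (x 2) 1)
        = phi (x 0) (x 1) := rfl
    rw [hphi] at hkey
    omega

lemma T_canon (k : ℕ) (hk : 7 ≤ k) (hk3 : k % 3 = 1) (r : ℕ) (hr : r < 3)
    (x : ℕ → ZMod 2) (hx : ∀ i < k + 3, x i = ZZ r i) :
    T (k + 3) x = 2 * (k + 2) + T k (ZZ r) := by
  rw [T_congr (k+3) x (ZZ r) hx, Tsplit]
  have h1 : S3 (k+3) (ZZ r) = 2*(k+2) := by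
    have hphi := phi_ZZ r hr
    have hkey := key (k+3) (by omega) (ZZ r)
    have hslk : slk (k+3) (ZZ r) = 0 := by
      unfold slk
      rw [Finset.sum_eq_zero (fun i _ => sl_ZZ r hr i), gsl_ZZ r hr _ _ (by omega) (by omega)]
    omega
  have h2 : T k (D^[3] (ZZ r)) = T k (ZZ r) :=
    T_congr _ _ _ (fun i _ => ZZ_D3 r hr (ZZ r) i rfl rfl rfl rfl)
  omega

set_option maxRecDepth 10000 in
lemma base7 : ∀ v : Fin 7 → ZMod 2,
    T 7 (padn v) ≤ 19 ∧
    (T 7 (padn v) = 19 ↔ ((∀ i < 7, padn v i = ZZ 2 i) ∨ (∀ i < 7, padn v i = ZZ 1 i))) ∧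
    (T 7 (padn v) = 18 ↔ (∀ i < 7, padn v i = ZZ 0 i)) := by
  decide

lemma base7' (x : ℕ → ZMod 2) :
    T 7 x ≤ 19 ∧
    (T 7 x = 19 ↔ ((∀ i < 7, x i = ZZ 2 i) ∨ (∀ i < 7, x i = ZZ 1 i))) ∧
    (T 7 x = 18 ↔ (∀ i < 7, x i = ZZ 0 i)) := by
  have hag : ∀ i < 7, x i = padn (fun i : Fin 7 => x i.1) i := fun i hi => by
    simp [padn, hi]
  obtain ⟨b1, b2, b3⟩ := base7 (fun i : Fin 7 => x i.1)
  have hT : T 7 x = T 7 (padn fun i : Fin 7 => x i.1) := T_congr _ _ _ hag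
  have hiff : ∀ r, ((∀ i < 7, x i = ZZ r i) ↔
      (∀ i < 7, padn (fun i : Fin 7 => x i.1) i = ZZ r i)) := by
    intro r
    constructor <;> intro h i hi
    · rw [← hag i hi]; exact h i hi
    · rw [hag i hi]; exact h i hi
  rw [hT, hiff 2, hiff 1, hiff 0]
  exact ⟨b1, b2, b3⟩

def Ef (t : ℕ) : ℕ := 3 * (t * t) + 15 * t + 19

lemma Ef_succ (t : ℕ) : Ef (t + 1) = Ef t + 6 * t + 18 := by unfold Ef; ring

lemma Ef_ge (t : ℕ) : 19 ≤ Ef t := by unfold Ef; omega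

lemma main : ∀ t : ℕ, ∀ x : ℕ → ZMod 2,
    T (3*t+7) x ≤ Ef t ∧
    (T (3*t+7) x = Ef t ↔ ((∀ i < 3*t+7, x i = ZZ 2 i) ∨ (∀ i < 3*t+7, x i = ZZ 1 i))) ∧
    (T (3*t+7) x = Ef t - 1 ↔ (∀ i < 3*t+7, x i = ZZ 0 i)) := by
  intro t
  induction t with
  | zero => intro x; simpa [Ef] using base7' x
  | succ t ih =>
    intro x
    have hm : 3*(t+1)+7 = (3*t+7)+3 := by ring
    rw [hm]
    have hsplit : T ((3*t+7)+3) x = S3 ((3*t+7)+3) x + T (3*t+7) (D^[3] x) := Tsplit _ x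
    have hS3le : S3 ((3*t+7)+3) x ≤ 2*((3*t+7)+3-1) := by
      have := key ((3*t+7)+3) (by omega) x
      omega
    obtain ⟨ih1, ih2, ih3⟩ := ih (D^[3] x)
    have hEf := Ef_succ t
    have hge := Ef_ge t
    have hz2 : T (3*t+7) (ZZ 2) = Ef t := (ih (ZZ 2)).2.1.mpr (Or.inl fun i _ => rfl)
    have hz1 : T (3*t+7) (ZZ 1) = Ef t := (ih (ZZ 1)).2.1.mpr (Or.inr fun i _ => rfl)
    have hz0 : T (3*t+7) (ZZ 0) = Ef t - 1 := (ih (ZZ 0)).2.2.mpr (fun i _ => rfl)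
    have hcan : ∀ r, r < 3 → (∀ i < (3*t+7)+3, x i = ZZ r i) →
        T ((3*t+7)+3) x = 2*((3*t+7)+2) + T (3*t+7) (ZZ r) :=
      fun r hr hx => T_canon (3*t+7) (by omega) (by omega) r hr x hx
    refine ⟨?_, ?_, ?_⟩
    · omega
    · constructor
      · intro hT
        rcases (by omega : T (3*t+7) (D^[3] x) = Ef t ∨ T (3*t+7) (D^[3] x) = Ef t - 1
            ∨ T (3*t+7) (D^[3] x) + 2 ≤ Ef t) with hA | hB | hC
        · rcases ih2.mp hA with h2 | h1
          · rcases step_core ((3*t+7)+3) (by omega) x 2 (by omega)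
                (fun i hi => h2 i (by omega)) with hc | hs
            · exact Or.inl hc
            · omega
          · rcases step_core ((3*t+7)+3) (by omega) x 1 (by omega)
                (fun i hi => h1 i (by omega)) with hc | hs
            · exact Or.inr hc
            · omega
        · have hzz := ih3.mp hB
          rcases step_core ((3*t+7)+3) (by omega) x 0 (by omega)
              (fun i hi => hzz i (by omega)) with hc | hs
          · have := hcan 0 (by omega) hc
            omega
          · omega
        · omega
      · rintro (hc | hc)
        · have := hcan 2 (by omega) hc; omega
        · have := hcan 1 (by omega) hc; omega
    · constructor
      · intro hT
        rcases (by omega : T (3*t+7) (D^[3] x) = Ef t ∨ T (3*t+7) (D^[3] x) = Ef t - 1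
            ∨ T (3*t+7) (D^[3] x) + 2 ≤ Ef t) with hA | hB | hC
        · rcases ih2.mp hA with h2 | h1
          · rcases step_core ((3*t+7)+3) (by omega) x 2 (by omega)
                (fun i hi => h2 i (by omega)) with hc | hs
            · have := hcan 2 (by omega) hc; omega
            · omega
          · rcases step_core ((3*t+7)+3) (by omega) x 1 (by omega)
                (fun i hi => h1 i (by omega)) with hc | hs
            · have := hcan 1 (by omega) hc; omega
            · omega
        · have hzz := ih3.mp hB
          rcases step_core ((3*t+7)+3) (by omega) x 0 (by omega)
              (fun i hi => hzz i (by omega)) with hc | hs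
          · exact hc
          · omega
        · omega
      · intro hc
        have := hcan 0 (by omega) hc
        omega

-- bridge to the Fin world
lemma wt_eq_W {k : ℕ} (y : Fin k → ZMod 2) : wt y = W k (padn y) := by
  unfold wt W
  rw [Finset.card_filter]
  rw [← Fin.sum_univ_eq_sum_range (fun i => c (padn y i)) k]
  refine Finset.sum_congr rfl fun i _ => ?_
  simp [c, padn, i.isLt]

lemma derIter_eq {n : ℕ} (x : Fin n → ZMod 2) :
    ∀ j, ∀ i (h : i < n - j), derIter x j ⟨i, h⟩ = D^[j] (padn x) i := by
  intro j
  induction j with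
  | zero =>
    intro i h
    show x ⟨i, h⟩ = padn x i
    simp [padn, show i < n from by omega]
  | succ j ih =>
    intro i h
    show der (derIter x j) ⟨i, h⟩ = _
    unfold der
    rw [ih i (by omega), ih (i+1) (by omega), Function.iterate_succ_apply']
    rfl

lemma tw_eq_T {n : ℕ} (x : Fin n → ZMod 2) : tw x = T n (padn x) := by
  unfold tw T
  refine Finset.sum_congr rfl fun j hj => ?_
  rw [wt_eq_W]
  refine W_congr _ _ _ fun i hi => ?_
  rw [show padn (derIter x j) i = derIter x j ⟨i, hi⟩ from by simp [padn, hi],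
    derIter_eq x j i hi]

end StAux

open StAux in
theorem stmt19 (n : ℕ) (hn : 7 ≤ n) (hmod : n % 3 = 1) :
    (n * (n + 1) + 2) / 3 - 1 = (n ^ 2 + n - 2) / 3 ∧
    IsGreatest {w : ℕ | (∃ x : Fin n → ZMod 2, tw x = w) ∧
        w ≠ (n * (n + 1) + 2) / 3} ((n ^ 2 + n - 2) / 3) ∧
    (∀ x : Fin n → ZMod 2, tw x = (n ^ 2 + n - 2) / 3 ↔ x = z2 n) := by
  obtain ⟨t, rfl⟩ : ∃ t, n = 3*t+7 := ⟨(n-7)/3, by omega⟩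
  have hge := Ef_ge t
  have hE1 : (3*t+7) * ((3*t+7)+1) + 2 = 3 * Ef t + 1 := by unfold Ef; ring
  have hE2 : (3*t+7)^2 + (3*t+7) + 1 = 3 * Ef t := by unfold Ef; ring
  set q := (3*t+7)^2 with hq
  have hEmax : ((3*t+7) * ((3*t+7)+1) + 2) / 3 = Ef t := by omega
  have hE2' : (q + (3*t+7) - 2) / 3 = Ef t - 1 := by omega
  have hz2pad : ∀ i < 3*t+7, padn (z2 (3*t+7)) i = ZZ 0 i := by
    intro i hi
    simp [padn, z2, ZZ, hi]
  have htwz2 : tw (z2 (3*t+7)) = Ef t - 1 := by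
    rw [tw_eq_T]
    exact (main t _).2.2.mpr hz2pad
  refine ⟨by omega, ⟨⟨⟨z2 _, ?_⟩, ?_⟩, ?_⟩, ?_⟩
  · rw [htwz2, hE2']
  · rw [hEmax, hE2']; omega
  · rintro w ⟨⟨x, rfl⟩, hne⟩
    rw [hEmax] at hne
    have hle : tw x ≤ Ef t := by rw [tw_eq_T]; exact (main t _).1
    omega
  · intro x
    rw [hE2', tw_eq_T]
    constructor
    · intro h
      have hag := (main t (padn x)).2.2.mp h
      funext i
      have hi := hag i.1 i.isLt
      rw [show padn x i.1 = x i from by simp [padn, i.isLt]] at hi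
      rw [hi]
      rfl
    · intro h
      subst h
      exact (main t _).2.2.mpr hz2pad
end
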